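/- arXiv:1511.07326 — 5 statements merged into one kernel-verified Lean document; each statement's English description precedes it below -/
import Mathlib

section
/- For any n ∈ ℕ and any choice of signs ε_R ∈ {-1,+1} indexed by dyadic rectangles R ⊆ [0,1)² of area 2^{-n}, the function F(x) = Σ_{|R|=2^{-n}} ε_R h_R(x) attains the value n+1 at some point x ∈ [0,1)², where h_R denotes the L^∞-normalized Haar function on R. -/
/-! Take `y = 1 - 2^{-(n+1)}`: at every scale it lies in the right half of the topmost dyadic
interval, so only the rectangles `R = R₁ × R₂` with `R₂` topmost see `y`, each with
`h_{R₂}(y) = 1`. Then choose `x` by descending the dyadic tree: once the interval `R₁` of length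
`2^{-k}` containing `x` is fixed, put `x` in its right half iff `ε_{R₁ × R₂} = 1`. At each of the
`n + 1` scales exactly one rectangle contains `(x, y)`, and it contributes `ε_R h_R(x, y) = 1`. -/

open Finset

/-- The L^∞-normalized Haar function of the dyadic interval `[m/2^k, (m+1)/2^k)`:
`-1` on the left half, `+1` on the right half, `0` outside. -/
noncomputable def haar (k m : ℕ) (x : ℝ) : ℝ :=
  if (m : ℝ) / 2 ^ k ≤ x ∧ x < ((m : ℝ) + 1) / 2 ^ k then
    (if x < (2 * (m : ℝ) + 1) / 2 ^ (k + 1) then -1 else 1)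
  else 0

/-- The Haar function of the dyadic rectangle `[m₁/2^k₁,(m₁+1)/2^k₁) × [m₂/2^k₂,(m₂+1)/2^k₂)`. -/
noncomputable def haar2 (k₁ m₁ k₂ m₂ : ℕ) (p : ℝ × ℝ) : ℝ :=
  haar k₁ m₁ p.1 * haar k₂ m₂ p.2

/-- The hyperbolic Haar sum `∑_{|R| = 2^{-n}} α_R h_R` over dyadic rectangles of area `2^{-n}`. -/
noncomputable def sbSum (n : ℕ) (α : ℕ → ℕ → ℕ → ℝ) (p : ℝ × ℝ) : ℝ :=
  ∑ k ∈ Finset.range (n + 1), ∑ m₁ ∈ Finset.range (2 ^ k),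
    ∑ m₂ ∈ Finset.range (2 ^ (n - k)), α k m₁ m₂ * haar2 k m₁ (n - k) m₂ p

/-- The unit square `[0,1)²`. -/
def unitSq : Set (ℝ × ℝ) := Set.Ico (0 : ℝ) 1 ×ˢ Set.Ico (0 : ℝ) 1

/-- The node at level `k` of the path down the dyadic tree that, at the node `(k, m)`,
goes to the right child iff `b k m`. -/
def dyadicPath (b : ℕ → ℕ → Bool) : ℕ → ℕ
  | 0 => 0
  | k + 1 => Nat.bit (b k (dyadicPath b k)) (dyadicPath b k)

namespace dyadicPath

variable (b : ℕ → ℕ → Bool)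

theorem div_two_pow (k : ℕ) : ∀ j, dyadicPath b (k + j) / 2 ^ j = dyadicPath b k
  | 0 => by simp
  | j + 1 => by
    rw [pow_succ', ← Nat.div_div_eq_div_mul, ← add_assoc, dyadicPath, Nat.bit_div_two,
      div_two_pow k j]

theorem lt_two_pow (k : ℕ) : dyadicPath b k < 2 ^ k := by
  have h := div_two_pow b 0 k
  rw [zero_add, dyadicPath, Nat.div_eq_zero_iff] at h
  exact h.resolve_left (by positivity)

theorem const_true (k : ℕ) : dyadicPath (fun _ _ ↦ true) k = 2 ^ k - 1 := by
  induction k with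
  | zero => rfl
  | succ k ih =>
    rw [dyadicPath, ih, Nat.bit_val, pow_succ]
    have := Nat.one_le_two_pow (n := k)
    simp only [Bool.toNat_true]
    omega

end dyadicPath

noncomputable def dyadicPoint (b : ℕ → ℕ → Bool) (N : ℕ) : ℝ := dyadicPath b N / 2 ^ N

theorem haar_of_nonneg {x : ℝ} (hx : 0 ≤ x) (k m : ℕ) :
    haar k m x = if ⌊2 ^ (k + 1) * x⌋₊ / 2 = m then
      (if ⌊2 ^ (k + 1) * x⌋₊ % 2 = 1 then 1 else -1) else 0 := by
  have h2k : (0 : ℝ) < 2 ^ k := by positivity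
  have hx' : 0 ≤ 2 ^ (k + 1) * x := by positivity
  have hlow : (m : ℝ) / 2 ^ k ≤ x ↔ 2 * m ≤ ⌊2 ^ (k + 1) * x⌋₊ := by
    rw [Nat.le_floor_iff hx', div_le_iff₀ h2k, pow_succ]
    push_cast
    constructor <;> intro <;> linarith
  have hup : x < ((m : ℝ) + 1) / 2 ^ k ↔ ⌊2 ^ (k + 1) * x⌋₊ < 2 * m + 2 := by
    rw [Nat.floor_lt hx', lt_div_iff₀ h2k, pow_succ]
    push_cast
    constructor <;> intro <;> linarith
  have hmid : x < (2 * (m : ℝ) + 1) / 2 ^ (k + 1) ↔ ⌊2 ^ (k + 1) * x⌋₊ < 2 * m + 1 := by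
    rw [Nat.floor_lt hx', lt_div_iff₀ (by positivity), mul_comm]
    push_cast
    rfl
  rw [haar, if_congr (and_congr hlow hup) (if_congr hmid rfl rfl) rfl]
  generalize ⌊2 ^ (k + 1) * x⌋₊ = q
  split_ifs <;> first | rfl | (exfalso; omega)

theorem dyadicPoint_mem_Ico (b : ℕ → ℕ → Bool) (N : ℕ) : dyadicPoint b N ∈ Set.Ico 0 1 := by
  rw [dyadicPoint]
  refine ⟨by positivity, (div_lt_one (by positivity)).2 ?_⟩
  exact_mod_cast dyadicPath.lt_two_pow b N

theorem haar_dyadicPoint (b : ℕ → ℕ → Bool) {k N : ℕ} (hk : k < N) (m : ℕ) :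
    haar k m (dyadicPoint b N) =
      if dyadicPath b k = m then (if b k (dyadicPath b k) then 1 else -1) else 0 := by
  have hfloor : ⌊2 ^ (k + 1) * dyadicPoint b N⌋₊ = dyadicPath b (k + 1) := by
    obtain ⟨d, rfl⟩ : ∃ d, N = k + 1 + d := ⟨N - (k + 1), by omega⟩
    rw [dyadicPoint, ← dyadicPath.div_two_pow b (k + 1) d, ← Nat.floor_div_eq_div (K := ℝ)]
    push_cast
    rw [pow_add (2 : ℝ) (k + 1) d]
    field_simp
  rw [haar_of_nonneg (dyadicPoint_mem_Ico b N).1, hfloor, dyadicPath, Nat.bit_div_two,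
    Nat.bit_mod_two]
  rcases eq_or_ne (dyadicPath b k) m with rfl | h
  · cases b k (dyadicPath b k) <;> rfl
  · simp only [h, if_false]

theorem sbSum_dyadicPoint (n : ℕ) (α : ℕ → ℕ → ℕ → ℝ) (b c : ℕ → ℕ → Bool) :
    sbSum n α (dyadicPoint b (n + 1), dyadicPoint c (n + 1)) =
      ∑ k ∈ range (n + 1), α k (dyadicPath b k) (dyadicPath c (n - k)) *
        ((if b k (dyadicPath b k) then 1 else -1) *
          (if c (n - k) (dyadicPath c (n - k)) then 1 else -1)) := by
  refine sum_congr rfl fun k hk_mem ↦ ?_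
  have hk : k < n + 1 := mem_range.1 hk_mem
  simp only [haar2, haar_dyadicPoint b hk, haar_dyadicPoint c (by omega : n - k < n + 1),
    ite_zero_mul, mul_ite_zero, sum_ite_eq, mem_range, dyadicPath.lt_two_pow, if_true]

/-- The signed small ball sum attains the value `n+1` at some point of `[0,1)²`. -/
theorem signed_small_ball_attains (n : ℕ) (ε : ℕ → ℕ → ℕ → ℝ)
    (hε : ∀ k m₁ m₂, ε k m₁ m₂ = 1 ∨ ε k m₁ m₂ = -1) :
    ∃ p ∈ unitSq, sbSum n ε p = n + 1 := by
  set b : ℕ → ℕ → Bool := fun k m ↦ ε k m (2 ^ (n - k) - 1) = 1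
  set top : ℕ → ℕ → Bool := fun _ _ ↦ true
  refine ⟨(dyadicPoint b (n + 1), dyadicPoint top (n + 1)),
    ⟨dyadicPoint_mem_Ico b (n + 1), dyadicPoint_mem_Ico top (n + 1)⟩, ?_⟩
  rw [sbSum_dyadicPoint]
  calc _ = ∑ _k ∈ range (n + 1), (1 : ℝ) := sum_congr rfl fun k _ ↦ by
        rcases hε k (dyadicPath b k) (2 ^ (n - k) - 1) with h | h <;>
          simp [b, top, dyadicPath.const_true, h]
    _ = n + 1 := by simp
end

section
/- For any n ∈ ℕ and any real coefficients α_R indexed by dyadic rectangles R ⊆ [0,1)² with |R| = 2^{-n}, the supremum norm of Σ_{|R|=2^{-n}} α_R h_R on [0,1)² is at least 2^{-n} Σ_{|R|=2^{-n}} |α_R|. -/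
open Finset

/-!
Temlyakov's Riesz product argument, run on the grid of points `(i, j) / 2 ^ (n + 1)`, where
every Haar function of the sum is `0` or `±1`. For the level-`k` rectangle `R` (side `2⁻ᵏ` in
`x`) containing the point, put `r_k = sgn(α_R) h_R`. Then the sum equals `∑ₖ |α_R| r_k`, and the
Riesz product `Ψ = ∏ₖ (1 + r_k)` is nonnegative with `Ψ r_k = Ψ`. Expanding `Ψ`, each nonempty
product of the `r_l` changes sign under the flip of one binary digit that fixes the level-`k`
rectangles (an `x`-digit if the top level is `≥ k`, a `y`-digit otherwise), so `Ψ` integrates a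
function constant on level-`k` rectangles exactly like `1` does. Hence the `Ψ`-weighted mean of
the sum over the grid is `2⁻ⁿ ∑ |α_R|`, which bounds its supremum from below.
-/

def bitSign (s i : ℕ) : ℝ := if i.testBit s then 1 else -1

lemma bitSign_xor_two_pow_of_ne {s t : ℕ} (h : t ≠ s) (i : ℕ) :
    bitSign s (i ^^^ 2 ^ t) = bitSign s i := by
  simp [bitSign, Nat.testBit_xor, h]

lemma bitSign_xor_two_pow_self (s i : ℕ) : bitSign s (i ^^^ 2 ^ s) = -bitSign s i := by
  cases h : i.testBit s <;> simp [bitSign, Nat.testBit_xor, h]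

lemma xor_two_pow_div_two_pow {s t : ℕ} (h : t < s) (i : ℕ) :
    (i ^^^ 2 ^ t) / 2 ^ s = i / 2 ^ s := by
  apply Nat.eq_of_testBit_eq
  intro b
  have : t ≠ b + s := by omega
  simp [Nat.testBit_div_two_pow, Nat.testBit_xor, this]

lemma sum_range_two_pow_eq_zero_of_xor {G : Type*} [AddCommGroup G] {M t : ℕ} (ht : t < M)
    {f : ℕ → G} (hf : ∀ i, f (i ^^^ 2 ^ t) = -f i) : ∑ i ∈ range (2 ^ M), f i = 0 := by
  refine sum_involution (fun i _ => i ^^^ 2 ^ t) (fun i _ => by simp [hf]) (fun i _ _ => ?_)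
    (fun i hi => ?_) (fun i _ => by simp)
  · simp
  · exact mem_range.2 <|
      Nat.xor_lt_two_pow (mem_range.1 hi) (Nat.pow_lt_pow_right one_lt_two ht)

lemma sum_range_mul_div {M : Type*} [AddCommMonoid M] (a b : ℕ) (f : ℕ → M) :
    ∑ i ∈ range (b * a), f (i / a) = a • ∑ m ∈ range b, f m := by
  rcases Nat.eq_zero_or_pos a with rfl | ha
  · simp
  rw [sum_range, ← finProdFinEquiv.sum_comp, Fintype.sum_prod_type, sum_range, smul_sum]
  simp [finProdFinEquiv_apply_val, Nat.add_mul_div_left _ _ ha, Nat.div_eq_of_lt]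

lemma natCast_div_two_pow_le_iff (a i k s : ℕ) :
    (a : ℝ) / 2 ^ k ≤ (i : ℝ) / 2 ^ (k + s) ↔ a * 2 ^ s ≤ i := by
  rw [add_comm k s, pow_add, ← div_div, div_le_div_iff_of_pos_right (by positivity),
    le_div_iff₀ (by positivity)]
  norm_cast

lemma natCast_div_two_pow_lt_iff (a i k s : ℕ) :
    (i : ℝ) / 2 ^ (k + s) < (a : ℝ) / 2 ^ k ↔ i < a * 2 ^ s := by
  rw [add_comm k s, pow_add, ← div_div, div_lt_div_iff_of_pos_right (by positivity),
    div_lt_iff₀ (by positivity)]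
  norm_cast

lemma haar_natCast_div_two_pow (k s m i : ℕ) :
    haar k m ((i : ℝ) / 2 ^ (k + s + 1)) = if i / 2 ^ (s + 1) = m then bitSign s i else 0 := by
  have hleft : (m : ℝ) / 2 ^ k ≤ (i : ℝ) / 2 ^ (k + (s + 1)) ↔ m ≤ i / 2 ^ (s + 1) := by
    rw [natCast_div_two_pow_le_iff, Nat.le_div_iff_mul_le (by positivity)]
  have hright :
      (i : ℝ) / 2 ^ (k + (s + 1)) < ((m + 1 : ℕ) : ℝ) / 2 ^ k ↔ i / 2 ^ (s + 1) < m + 1 := by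
    rw [natCast_div_two_pow_lt_iff, Nat.div_lt_iff_lt_mul (by positivity)]
  have hhalf : (i : ℝ) / 2 ^ (k + 1 + s) < ((2 * m + 1 : ℕ) : ℝ) / 2 ^ (k + 1) ↔
      i / 2 ^ s < 2 * m + 1 := by
    rw [natCast_div_two_pow_lt_iff, Nat.div_lt_iff_lt_mul (by positivity)]
  have hdiv : i / 2 ^ (s + 1) = i / 2 ^ s / 2 := by rw [pow_succ, Nat.div_div_eq_div_mul]
  rw [← add_assoc] at hleft hright
  rw [add_right_comm k 1 s] at hhalf
  push_cast at hright hhalf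
  simp only [haar, hleft, hright, hhalf, hdiv, bitSign, Nat.testBit_eq_decide_div_mod_eq,
    decide_eq_true_eq]
  split_ifs <;> first | rfl | omega

lemma prod_eq_neg_prod_of_eq_neg {ι R : Type*} [CommRing R] [DecidableEq ι] {T : Finset ι}
    {m : ι} (hm : m ∈ T) {u v : ι → R} (hum : u m = -v m) (huv : ∀ l ∈ T, l ≠ m → u l = v l) :
    ∏ l ∈ T, u l = -∏ l ∈ T, v l := by
  rw [← mul_prod_erase T u hm, ← mul_prod_erase T v hm, hum,
    prod_congr rfl fun l hl => huv l (mem_of_mem_erase hl) (ne_of_mem_erase hl), neg_mul]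

lemma natCast_div_two_pow_mem_Ico {i N : ℕ} (hi : i < 2 ^ N) : (i : ℝ) / 2 ^ N ∈ Set.Ico 0 1 :=
  ⟨by positivity, (div_lt_one (by positivity)).2 (by exact_mod_cast hi)⟩

section Grid

variable (n : ℕ) (α : ℕ → ℕ → ℕ → ℝ)

/-- The coefficient of the level-`k` rectangle (side `2⁻ᵏ` in `x`) containing the grid point
`(i, j) / 2 ^ (n + 1)`. -/
def gridCoeff (k i j : ℕ) : ℝ := α k (i / 2 ^ (n - k + 1)) (j / 2 ^ (k + 1))

/-- `sgn(α_R) h_R` at the grid point, with the sign of `0` taken to be `1`, so that it is `±1`. -/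
noncomputable def rieszSign (k i j : ℕ) : ℝ :=
  (if 0 ≤ gridCoeff n α k i j then 1 else -1) * bitSign (n - k) i * bitSign k j

noncomputable def rieszProduct (i j : ℕ) : ℝ := ∏ k ∈ range (n + 1), (1 + rieszSign n α k i j)

lemma sbSum_natCast_div_two_pow {i j : ℕ} (hi : i < 2 ^ (n + 1)) (hj : j < 2 ^ (n + 1)) :
    sbSum n α ((i : ℝ) / 2 ^ (n + 1), (j : ℝ) / 2 ^ (n + 1)) =
      ∑ k ∈ range (n + 1), gridCoeff n α k i j * bitSign (n - k) i * bitSign k j := by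
  refine sum_congr rfl fun k hk => ?_
  have hk : k ≤ n := Nat.lt_succ_iff.1 (mem_range.1 hk)
  have hx : (i : ℝ) / 2 ^ (n + 1) = (i : ℝ) / 2 ^ (k + (n - k) + 1) := by
    rw [Nat.add_sub_cancel' hk]
  have hy : (j : ℝ) / 2 ^ (n + 1) = (j : ℝ) / 2 ^ (n - k + k + 1) := by
    rw [Nat.sub_add_cancel hk]
  have hi' : i / 2 ^ (n - k + 1) < 2 ^ k := by
    rw [Nat.div_lt_iff_lt_mul (by positivity), ← pow_add]; convert hi using 2; omega
  have hj' : j / 2 ^ (k + 1) < 2 ^ (n - k) := by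
    rw [Nat.div_lt_iff_lt_mul (by positivity), ← pow_add]; convert hj using 2; omega
  simp only [haar2, hx, hy, haar_natCast_div_two_pow, mul_ite, ite_mul, mul_zero, zero_mul,
    sum_ite_eq, mem_range, hi', hj', if_true, gridCoeff]
  ring

lemma gridCoeff_mul_bitSign_mul_bitSign (k i j : ℕ) :
    gridCoeff n α k i j * bitSign (n - k) i * bitSign k j =
      |gridCoeff n α k i j| * rieszSign n α k i j := by
  unfold rieszSign
  split_ifs with h
  · rw [abs_of_nonneg h]; ring
  · rw [abs_of_neg (not_le.1 h)]; ring

lemma rieszSign_eq_one_or_eq_neg_one (k i j : ℕ) :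
    rieszSign n α k i j = 1 ∨ rieszSign n α k i j = -1 := by
  unfold rieszSign bitSign
  split_ifs <;> norm_num

lemma rieszProduct_nonneg (i j : ℕ) : 0 ≤ rieszProduct n α i j :=
  prod_nonneg fun k _ => by
    rcases rieszSign_eq_one_or_eq_neg_one n α k i j with h | h <;> simp [h]

lemma rieszProduct_mul_rieszSign {k : ℕ} (hk : k ≤ n) (i j : ℕ) :
    rieszProduct n α i j * rieszSign n α k i j = rieszProduct n α i j := by
  have hself : (1 + rieszSign n α k i j) * rieszSign n α k i j = 1 + rieszSign n α k i j := by
    rcases rieszSign_eq_one_or_eq_neg_one n α k i j with h | h <;> rw [h] <;> norm_num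
  rw [rieszProduct, ← mul_prod_erase _ _ (mem_range.2 (Nat.lt_succ_of_le hk)), mul_right_comm,
    hself]

lemma rieszSign_xor_fst_of_lt {k t : ℕ} (ht : t < n - k) (i j : ℕ) :
    rieszSign n α k (i ^^^ 2 ^ t) j = rieszSign n α k i j := by
  rw [rieszSign, rieszSign, gridCoeff, gridCoeff,
    xor_two_pow_div_two_pow (by omega : t < n - k + 1), bitSign_xor_two_pow_of_ne ht.ne]

lemma rieszSign_xor_fst_self (k i j : ℕ) :
    rieszSign n α k (i ^^^ 2 ^ (n - k)) j = -rieszSign n α k i j := by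
  rw [rieszSign, rieszSign, gridCoeff, gridCoeff, xor_two_pow_div_two_pow (Nat.lt_add_one _),
    bitSign_xor_two_pow_self]
  ring

lemma rieszSign_xor_snd_of_lt {k t : ℕ} (ht : t < k) (i j : ℕ) :
    rieszSign n α k i (j ^^^ 2 ^ t) = rieszSign n α k i j := by
  rw [rieszSign, rieszSign, gridCoeff, gridCoeff,
    xor_two_pow_div_two_pow (by omega : t < k + 1), bitSign_xor_two_pow_of_ne ht.ne]

lemma rieszSign_xor_snd_self (k i j : ℕ) :
    rieszSign n α k i (j ^^^ 2 ^ k) = -rieszSign n α k i j := by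
  rw [rieszSign, rieszSign, gridCoeff, gridCoeff, xor_two_pow_div_two_pow (Nat.lt_add_one _),
    bitSign_xor_two_pow_self]
  ring

lemma sum_prod_rieszSign_mul_eq_zero (k : ℕ) {T : Finset ℕ} (hT : T.Nonempty)
    (hTn : T ⊆ range (n + 1)) (φ : ℕ → ℕ → ℝ) :
    ∑ i ∈ range (2 ^ (n + 1)), ∑ j ∈ range (2 ^ (n + 1)),
      (∏ l ∈ T, rieszSign n α l i j) * φ (i / 2 ^ (n - k + 1)) (j / 2 ^ (k + 1)) = 0 := by
  have hle : ∀ l ∈ T, l ≤ n := fun l hl => Nat.lt_succ_iff.1 (mem_range.1 (hTn hl))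
  by_cases hmax : k ≤ T.max' hT
  · set m := T.max' hT
    have hm : m ≤ n := hle m (T.max'_mem hT)
    refine sum_range_two_pow_eq_zero_of_xor (t := n - m) (by omega) fun i => ?_
    rw [← sum_neg_distrib]
    refine sum_congr rfl fun j _ => ?_
    have hflip :
        ∏ l ∈ T, rieszSign n α l (i ^^^ 2 ^ (n - m)) j = -∏ l ∈ T, rieszSign n α l i j :=
      prod_eq_neg_prod_of_eq_neg (T.max'_mem hT) (rieszSign_xor_fst_self n α m i j)
        fun l hl hlm => rieszSign_xor_fst_of_lt n α
          (by have := (T.le_max' l hl).lt_of_ne hlm; omega) i j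
    rw [xor_two_pow_div_two_pow (by omega), hflip, neg_mul]
  · set m := T.min' hT
    have hmk : m < k := lt_of_le_of_lt (T.min'_le_max' hT) (not_le.1 hmax)
    refine sum_eq_zero fun i _ => sum_range_two_pow_eq_zero_of_xor (t := m) ?_ fun j => ?_
    · exact lt_of_le_of_lt (hle m (T.min'_mem hT)) (Nat.lt_succ_self n)
    have hflip : ∏ l ∈ T, rieszSign n α l i (j ^^^ 2 ^ m) = -∏ l ∈ T, rieszSign n α l i j :=
      prod_eq_neg_prod_of_eq_neg (T.min'_mem hT) (rieszSign_xor_snd_self n α m i j)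
        fun l hl hlm => rieszSign_xor_snd_of_lt n α ((T.min'_le l hl).lt_of_ne' hlm) i j
    rw [xor_two_pow_div_two_pow (by omega), hflip, neg_mul]

lemma sum_rieszProduct_mul (k : ℕ) (φ : ℕ → ℕ → ℝ) :
    ∑ i ∈ range (2 ^ (n + 1)), ∑ j ∈ range (2 ^ (n + 1)),
      rieszProduct n α i j * φ (i / 2 ^ (n - k + 1)) (j / 2 ^ (k + 1)) =
    ∑ i ∈ range (2 ^ (n + 1)), ∑ j ∈ range (2 ^ (n + 1)),
      φ (i / 2 ^ (n - k + 1)) (j / 2 ^ (k + 1)) := by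
  simp only [rieszProduct, prod_one_add, sum_mul]
  rw [sum_congr rfl fun i _ => sum_comm, sum_comm, sum_eq_single ∅]
  · simp
  · exact fun T hT hne => sum_prod_rieszSign_mul_eq_zero n α k (nonempty_iff_ne_empty.2 hne)
      (mem_powerset.1 hT) φ
  · simp

lemma sum_grid_div_two_pow {k : ℕ} (hk : k ≤ n) (φ : ℕ → ℕ → ℝ) :
    ∑ i ∈ range (2 ^ (n + 1)), ∑ j ∈ range (2 ^ (n + 1)),
      φ (i / 2 ^ (n - k + 1)) (j / 2 ^ (k + 1)) =
    2 ^ (n + 2) * ∑ m₁ ∈ range (2 ^ k), ∑ m₂ ∈ range (2 ^ (n - k)), φ m₁ m₂ := by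
  have hi : 2 ^ (n + 1) = 2 ^ k * 2 ^ (n - k + 1) := by rw [← pow_add]; congr 1; omega
  have hj : 2 ^ (n + 1) = 2 ^ (n - k) * 2 ^ (k + 1) := by rw [← pow_add]; congr 1; omega
  have hexp : (2 : ℝ) ^ (n + 2) = 2 ^ (n - k + 1) * 2 ^ (k + 1) := by
    rw [← pow_add]; congr 1; omega
  have hinner : ∀ m₁, ∑ j ∈ range (2 ^ (n + 1)), φ m₁ (j / 2 ^ (k + 1)) =
      2 ^ (k + 1) • ∑ m₂ ∈ range (2 ^ (n - k)), φ m₁ m₂ := fun m₁ => by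
    rw [hj, sum_range_mul_div]
  simp_rw [hinner, ← smul_sum]
  rw [hi, sum_range_mul_div (2 ^ (n - k + 1)) (2 ^ k)
    fun m₁ => ∑ m₂ ∈ range (2 ^ (n - k)), φ m₁ m₂, hexp, smul_smul, nsmul_eq_mul]
  push_cast
  ring

lemma sum_rieszProduct :
    ∑ i ∈ range (2 ^ (n + 1)), ∑ j ∈ range (2 ^ (n + 1)), rieszProduct n α i j =
      2 ^ (n + 1) * 2 ^ (n + 1) := by
  simpa using sum_rieszProduct_mul n α 0 fun _ _ => 1

lemma sum_rieszProduct_mul_sbSum :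
    ∑ i ∈ range (2 ^ (n + 1)), ∑ j ∈ range (2 ^ (n + 1)),
      rieszProduct n α i j * sbSum n α ((i : ℝ) / 2 ^ (n + 1), (j : ℝ) / 2 ^ (n + 1)) =
    2 ^ (n + 2) * ∑ k ∈ range (n + 1), ∑ m₁ ∈ range (2 ^ k),
      ∑ m₂ ∈ range (2 ^ (n - k)), |α k m₁ m₂| := by
  calc _ = ∑ i ∈ range (2 ^ (n + 1)), ∑ j ∈ range (2 ^ (n + 1)), ∑ k ∈ range (n + 1),
        rieszProduct n α i j * |gridCoeff n α k i j| := by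
        refine sum_congr rfl fun i hi => sum_congr rfl fun j hj => ?_
        rw [sbSum_natCast_div_two_pow n α (mem_range.1 hi) (mem_range.1 hj), mul_sum]
        refine sum_congr rfl fun k hk => ?_
        rw [gridCoeff_mul_bitSign_mul_bitSign, mul_left_comm,
          rieszProduct_mul_rieszSign n α (Nat.lt_succ_iff.1 (mem_range.1 hk)), mul_comm]
    _ = ∑ k ∈ range (n + 1), ∑ i ∈ range (2 ^ (n + 1)), ∑ j ∈ range (2 ^ (n + 1)),
        rieszProduct n α i j * |gridCoeff n α k i j| := by
        rw [sum_congr rfl fun i _ => sum_comm, sum_comm]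
    _ = _ := by
        rw [mul_sum]
        refine sum_congr rfl fun k hk => ?_
        exact (sum_rieszProduct_mul n α k fun m₁ m₂ => |α k m₁ m₂|).trans <|
          sum_grid_div_two_pow n (Nat.lt_succ_iff.1 (mem_range.1 hk)) fun m₁ m₂ => |α k m₁ m₂|

lemma abs_haar_le_one (k m : ℕ) (x : ℝ) : |haar k m x| ≤ 1 := by
  unfold haar; split_ifs <;> norm_num

lemma abs_sbSum_le (p : ℝ × ℝ) :
    |sbSum n α p| ≤ ∑ k ∈ range (n + 1), ∑ m₁ ∈ range (2 ^ k),
      ∑ m₂ ∈ range (2 ^ (n - k)), |α k m₁ m₂| := by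
  refine (abs_sum_le_sum_abs _ _).trans (sum_le_sum fun k _ => ?_)
  refine (abs_sum_le_sum_abs _ _).trans (sum_le_sum fun m₁ _ => ?_)
  refine (abs_sum_le_sum_abs _ _).trans (sum_le_sum fun m₂ _ => ?_)
  rw [haar2, abs_mul, abs_mul]
  exact mul_le_of_le_one_right (abs_nonneg _)
    (mul_le_one₀ (abs_haar_le_one ..) (abs_nonneg _) (abs_haar_le_one ..))

end Grid

/-- The two-dimensional small ball inequality with general coefficients. -/
theorem small_ball_inequality_2d (n : ℕ) (α : ℕ → ℕ → ℕ → ℝ) :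
    sSup ((fun p => |sbSum n α p|) '' unitSq) ≥
      ((2 : ℝ) ^ n)⁻¹ * ∑ k ∈ Finset.range (n + 1), ∑ m₁ ∈ Finset.range (2 ^ k),
        ∑ m₂ ∈ Finset.range (2 ^ (n - k)), |α k m₁ m₂| := by
  set M := sSup ((fun p => |sbSum n α p|) '' unitSq)
  set S := ∑ k ∈ range (n + 1), ∑ m₁ ∈ range (2 ^ k), ∑ m₂ ∈ range (2 ^ (n - k)), |α k m₁ m₂|
  have hbdd : BddAbove ((fun p => |sbSum n α p|) '' unitSq) :=
    ⟨S, Set.forall_mem_image.2 fun p _ => abs_sbSum_le n α p⟩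
  have hgrid : ∀ i ∈ range (2 ^ (n + 1)), ∀ j ∈ range (2 ^ (n + 1)),
      sbSum n α ((i : ℝ) / 2 ^ (n + 1), (j : ℝ) / 2 ^ (n + 1)) ≤ M := fun i hi j hj =>
    (le_abs_self _).trans <| le_csSup hbdd <| Set.mem_image_of_mem _ <|
      Set.mk_mem_prod (natCast_div_two_pow_mem_Ico (mem_range.1 hi))
        (natCast_div_two_pow_mem_Ico (mem_range.1 hj))
  have hweighted : (2 : ℝ) ^ (n + 2) * S ≤ 2 ^ (n + 1) * 2 ^ (n + 1) * M := by
    rw [← sum_rieszProduct_mul_sbSum, ← sum_rieszProduct n α, sum_mul]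
    refine sum_le_sum fun i hi => ?_
    rw [sum_mul]
    exact sum_le_sum fun j hj =>
      mul_le_mul_of_nonneg_left (hgrid i hi j hj) (rieszProduct_nonneg n α i j)
  have hscaled : (2 : ℝ) ^ (n + 2) * S ≤ 2 ^ (n + 2) * (2 ^ n * M) := by
    convert hweighted using 1; ring
  rw [ge_iff_le, inv_mul_le_iff₀ (by positivity)]
  exact le_of_mul_le_mul_left hscaled (by positivity)
end

section
/- For every m ≥ 1, the number of binary (0,m,2)-nets in which all points have coordinates of the form k·2^{-m}, 0 ≤ k < 2^m, is exactly 2^{m·2^{m-1}}. -/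
/-- `P` is (the integer-grid version of) a binary `(0,m,2)`-net in which all points have
coordinates of the form `k·2^{-m}`: identifying the point `(k₁ 2^{-m}, k₂ 2^{-m})` with the
pair `(k₁, k₂)`, the set consists of `2^m` grid points and every dyadic rectangle of area
`2^{-m}`, i.e. of shape `2^{-j} × 2^{-(m-j)}`, contains exactly one point
(the point `(k₁ 2^{-m}, k₂ 2^{-m})` lies in the rectangle indexed by `(a, b)` iff
`k₁ / 2^{m-j} = a` and `k₂ / 2^j = b`). -/
def IsBinaryNet (m : ℕ) (P : Finset (ℕ × ℕ)) : Prop :=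
  P ⊆ Finset.range (2 ^ m) ×ˢ Finset.range (2 ^ m) ∧
  P.card = 2 ^ m ∧
  ∀ j ≤ m, ∀ a < 2 ^ j, ∀ b < 2 ^ (m - j),
    (P.filter (fun q => q.1 / 2 ^ (m - j) = a ∧ q.2 / 2 ^ j = b)).card = 1


open Finset

/-!
Cut a net of order `m + 1` into its left and right strips `x < 2^m` and `x ≥ 2^m`. Merging the
rows `2v, 2v+1` into one turns each strip into a net of order `m` (the rectangles of order `m + 1`
of width at most `2^m` are exactly the rectangles of the strips). The only remaining condition,
one point per row, says that in each row pair the left and the right point occupy different rows.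
Conversely, two nets of order `m` and a choice, for each of the `2^m` row pairs, of the row taken
by the left point glue to a net of order `m + 1`. Hence `N(m+1) = N(m)^2 · 2^(2^m)` and `N(0) = 1`.
-/

lemma two_pow_sub_mul_two_pow {m j : ℕ} (hj : j ≤ m) : 2 ^ (m - j) * 2 ^ j = 2 ^ m := by
  rw [← pow_add, Nat.sub_add_cancel hj]

lemma div_two_pow_sub_lt {m j x : ℕ} (hj : j ≤ m) (hx : x < 2 ^ m) : x / 2 ^ (m - j) < 2 ^ j :=
  Nat.div_lt_of_lt_mul (by rwa [two_pow_sub_mul_two_pow hj])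

lemma div_two_pow_lt {m j x : ℕ} (hj : j ≤ m) (hx : x < 2 ^ m) : x / 2 ^ j < 2 ^ (m - j) :=
  Nat.div_lt_of_lt_mul (by rwa [mul_comm, two_pow_sub_mul_two_pow hj])

lemma div_two_pow_sub_eq_iff {m j x i a : ℕ} (hj : j ≤ m) (ha : a < 2 ^ j) :
    x / 2 ^ (m - j) = 2 ^ j * i + a ↔ x / 2 ^ m = i ∧ x % 2 ^ m / 2 ^ (m - j) = a := by
  rw [← two_pow_sub_mul_two_pow hj, ← Nat.div_div_eq_div_mul, Nat.mod_mul_right_div_self,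
    Nat.div_mod_unique (by positivity), add_comm, eq_comm]
  exact (and_iff_left ha).symm

lemma div_two_pow_sub_eq_div_iff {m j x x' : ℕ} (hj : j ≤ m) :
    x / 2 ^ (m - j) = x' / 2 ^ (m - j) ↔
      x / 2 ^ m = x' / 2 ^ m ∧ x % 2 ^ m / 2 ^ (m - j) = x' % 2 ^ m / 2 ^ (m - j) := by
  have hx' := (div_two_pow_sub_eq_iff (x := x') hj
    (div_two_pow_sub_lt hj (Nat.mod_lt x' (by positivity)))).2 ⟨rfl, rfl⟩
  rw [hx', div_two_pow_sub_eq_iff hj (div_two_pow_sub_lt hj (Nat.mod_lt x' (by positivity)))]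

lemma div_two_div_two_pow (y j : ℕ) : y / 2 / 2 ^ j = y / 2 ^ (j + 1) := by
  rw [Nat.div_div_eq_div_mul, pow_succ']

namespace IsBinaryNet

variable {m : ℕ} {P : Finset (ℕ × ℕ)}

lemma lt (hP : IsBinaryNet m P) {q : ℕ × ℕ} (hq : q ∈ P) : q.1 < 2 ^ m ∧ q.2 < 2 ^ m := by
  simpa using hP.1 hq

lemma exists_mem (hP : IsBinaryNet m P) {j a b : ℕ} (hj : j ≤ m) (ha : a < 2 ^ j)
    (hb : b < 2 ^ (m - j)) : ∃ q ∈ P, q.1 / 2 ^ (m - j) = a ∧ q.2 / 2 ^ j = b := by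
  obtain ⟨q, hq⟩ := card_pos.1 ((hP.2.2 j hj a ha b hb).symm ▸ one_pos)
  exact ⟨q, (mem_filter.1 hq).1, (mem_filter.1 hq).2⟩

lemma eq_of_div_eq (hP : IsBinaryNet m P) {j : ℕ} (hj : j ≤ m) {q q' : ℕ × ℕ} (hq : q ∈ P)
    (hq' : q' ∈ P) (h₁ : q.1 / 2 ^ (m - j) = q'.1 / 2 ^ (m - j))
    (h₂ : q.2 / 2 ^ j = q'.2 / 2 ^ j) : q = q' :=
  card_le_one.1 (hP.2.2 j hj _ (div_two_pow_sub_lt hj (hP.lt hq).1) _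
    (div_two_pow_lt hj (hP.lt hq).2)).le q (mem_filter.2 ⟨hq, rfl, rfl⟩) q'
    (mem_filter.2 ⟨hq', h₁.symm, h₂.symm⟩)

lemma exists_mem_snd_eq (hP : IsBinaryNet m P) {b : ℕ} (hb : b < 2 ^ m) : ∃ q ∈ P, q.2 = b := by
  obtain ⟨q, hq, -, hq₂⟩ := hP.exists_mem (j := 0) (Nat.zero_le m) one_pos (by simpa using hb)
  exact ⟨q, hq, by simpa using hq₂⟩

lemma eq_of_snd_eq (hP : IsBinaryNet m P) {q q' : ℕ × ℕ} (hq : q ∈ P) (hq' : q' ∈ P)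
    (h : q.2 = q'.2) : q = q' :=
  hP.eq_of_div_eq (Nat.zero_le m) hq hq'
    (by rw [Nat.sub_zero, Nat.div_eq_of_lt (hP.lt hq).1, Nat.div_eq_of_lt (hP.lt hq').1])
    (by simpa using h)

lemma of_exists_of_eq (hsub : P ⊆ range (2 ^ m) ×ˢ range (2 ^ m))
    (hex : ∀ j ≤ m, ∀ a < 2 ^ j, ∀ b < 2 ^ (m - j),
      ∃ q ∈ P, q.1 / 2 ^ (m - j) = a ∧ q.2 / 2 ^ j = b)
    (heq : ∀ j ≤ m, ∀ q ∈ P, ∀ q' ∈ P,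
      q.1 / 2 ^ (m - j) = q'.1 / 2 ^ (m - j) → q.2 / 2 ^ j = q'.2 / 2 ^ j → q = q') :
    IsBinaryNet m P := by
  refine ⟨hsub, ?_, fun j hj a ha b hb => ?_⟩
  · have hcols : P.image Prod.fst = range (2 ^ m) := by
      ext x
      simp only [mem_image, mem_range]
      constructor
      · rintro ⟨q, hq, rfl⟩
        exact mem_range.1 (mem_product.1 (hsub hq)).1
      · intro hx
        obtain ⟨q, hq, hq₁, -⟩ := hex m le_rfl x hx 0 (by simp)
        exact ⟨q, hq, by simpa using hq₁⟩
    rw [← card_range (2 ^ m), ← hcols, card_image_of_injOn]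
    intro q hq q' hq' h
    have hy : ∀ q ∈ P, q.2 / 2 ^ m = 0 := fun q hq =>
      Nat.div_eq_of_lt (mem_range.1 (mem_product.1 (hsub hq)).2)
    exact heq m le_rfl q hq q' hq' (by simpa using h) (by rw [hy q hq, hy q' hq'])
  · obtain ⟨q, hq, hq₁, hq₂⟩ := hex j hj a ha b hb
    refine card_eq_one.2 ⟨q, eq_singleton_iff_unique_mem.2 ⟨mem_filter.2 ⟨hq, hq₁, hq₂⟩, ?_⟩⟩
    intro q' hq'
    obtain ⟨hq', hq'₁, hq'₂⟩ := mem_filter.1 hq'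
    exact heq j hj q' hq' q hq (hq'₁.trans hq₁.symm) (hq'₂.trans hq₂.symm)

lemma fst_div_lt_two (hP : IsBinaryNet (m + 1) P) {q : ℕ × ℕ} (hq : q ∈ P) : q.1 / 2 ^ m < 2 :=
  Nat.div_lt_of_lt_mul (by rw [← pow_succ]; exact (hP.lt hq).1)

end IsBinaryNet

def squash (m : ℕ) (q : ℕ × ℕ) : ℕ × ℕ := (q.1 % 2 ^ m, q.2 / 2)

/-- `half m i P` is the part of `P` in the vertical strip `i·2^m ≤ x < (i+1)·2^m`, moved to the
left edge, with each pair of rows `2v, 2v+1` merged into row `v`. -/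
def half (m : ℕ) (i : Fin 2) (P : Finset (ℕ × ℕ)) : Finset (ℕ × ℕ) :=
  (P.filter fun q => q.1 / 2 ^ m = (i : ℕ)).image (squash m)

lemma mem_half {m : ℕ} {i : Fin 2} {P : Finset (ℕ × ℕ)} {p : ℕ × ℕ} :
    p ∈ half m i P ↔ ∃ q ∈ P, q.1 / 2 ^ m = (i : ℕ) ∧ squash m q = p := by
  simp [half, and_assoc]

lemma IsBinaryNet.half {m : ℕ} {P : Finset (ℕ × ℕ)} (hP : IsBinaryNet (m + 1) P) (i : Fin 2) :
    IsBinaryNet m (half m i P) := by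
  refine .of_exists_of_eq ?_ (fun j hj a ha b hb => ?_) (fun j hj p hp p' hp' h₁ h₂ => ?_)
  · intro p hp
    obtain ⟨q, hq, -, rfl⟩ := mem_half.1 hp
    have hy := (hP.lt hq).2
    rw [pow_succ] at hy
    simp only [squash, mem_product, mem_range]
    exact ⟨Nat.mod_lt _ (by positivity), by omega⟩
  · have hi : 2 ^ j * i + a < 2 ^ (j + 1) := by
      have : (i : ℕ) ≤ 1 := Nat.le_of_lt_succ i.isLt
      rw [pow_succ]; nlinarith
    obtain ⟨q, hq, hq₁, hq₂⟩ :=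
      hP.exists_mem (by omega) hi (by rwa [Nat.add_sub_add_right] : b < 2 ^ (m + 1 - (j + 1)))
    rw [Nat.add_sub_add_right, div_two_pow_sub_eq_iff hj ha] at hq₁
    exact ⟨squash m q, mem_half.2 ⟨q, hq, hq₁.1, rfl⟩, hq₁.2,
      by rwa [squash, div_two_div_two_pow]⟩
  · obtain ⟨q, hq, hqi, rfl⟩ := mem_half.1 hp
    obtain ⟨q', hq', hqi', rfl⟩ := mem_half.1 hp'
    rw [hP.eq_of_div_eq (j := j + 1) (by omega) hq hq'
      (by
        rw [Nat.add_sub_add_right, div_two_pow_sub_eq_div_iff hj]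
        exact ⟨hqi.trans hqi'.symm, h₁⟩)
      (by rw [← div_two_div_two_pow, ← div_two_div_two_pow]; exact h₂)]

/-- Inverse of `squash m` on the strip `i`: the point of row pair `v` goes to the odd row
`2v+1` iff `v ∈ E` for the left strip, and iff `v ∉ E` for the right one. -/
def lift (m : ℕ) (E : Finset ℕ) (i : Fin 2) (p : ℕ × ℕ) : ℕ × ℕ :=
  (2 ^ m * i + p.1, 2 * p.2 + (i + if p.2 ∈ E then 1 else 0) % 2)

def glue (m : ℕ) (Q : Fin 2 → Finset (ℕ × ℕ)) (E : Finset ℕ) : Finset (ℕ × ℕ) :=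
  univ.biUnion fun i => (Q i).image (lift m E i)

section lift

variable {m : ℕ} {E : Finset ℕ} {i : Fin 2} {p : ℕ × ℕ}

lemma lift_fst_div (hp : p.1 < 2 ^ m) : (lift m E i p).1 / 2 ^ m = i := by
  rw [lift, Nat.mul_add_div (by positivity), Nat.div_eq_of_lt hp, add_zero]

lemma lift_fst_mod (hp : p.1 < 2 ^ m) : (lift m E i p).1 % 2 ^ m = p.1 := by
  rw [lift, Nat.mul_add_mod, Nat.mod_eq_of_lt hp]

lemma lift_snd_div_two : (lift m E i p).2 / 2 = p.2 := by
  simp only [lift]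
  omega

lemma squash_lift (hp : p.1 < 2 ^ m) : squash m (lift m E i p) = p :=
  Prod.ext (lift_fst_mod hp) lift_snd_div_two

lemma lift_parity (hp : p.1 < 2 ^ m) :
    ((lift m E i p).1 / 2 ^ m + (lift m E i p).2) % 2 = if p.2 ∈ E then 1 else 0 := by
  rw [lift_fst_div hp, lift]
  split_ifs <;> omega

lemma lift_fst_div_two_pow_sub {j : ℕ} (hj : j ≤ m) (hp : p.1 < 2 ^ m) :
    (lift m E i p).1 / 2 ^ (m - j) = 2 ^ j * i + p.1 / 2 ^ (m - j) :=
  (div_two_pow_sub_eq_iff hj (div_two_pow_sub_lt hj hp)).2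
    ⟨lift_fst_div hp, by rw [lift_fst_mod hp]⟩

end lift

lemma mem_glue {m : ℕ} {Q : Fin 2 → Finset (ℕ × ℕ)} {E : Finset ℕ} {q : ℕ × ℕ} :
    q ∈ glue m Q E ↔ ∃ i, ∃ p ∈ Q i, lift m E i p = q := by
  simp [glue]

section glue

variable {m : ℕ} {Q : Fin 2 → Finset (ℕ × ℕ)}

lemma glue_subset (hQ : ∀ i, IsBinaryNet m (Q i)) (E : Finset ℕ) :
    glue m Q E ⊆ range (2 ^ (m + 1)) ×ˢ range (2 ^ (m + 1)) := by
  intro q hq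
  obtain ⟨i, p, hp, rfl⟩ := mem_glue.1 hq
  obtain ⟨hp₁, hp₂⟩ := (hQ i).lt hp
  have hi : (i : ℕ) ≤ 1 := Nat.le_of_lt_succ i.isLt
  simp only [lift, mem_product, mem_range, pow_succ]
  constructor
  · nlinarith
  · split_ifs <;> omega

lemma exists_mem_glue (hQ : ∀ i, IsBinaryNet m (Q i)) (E : Finset ℕ) {j a b : ℕ} (hj : j ≤ m + 1)
    (ha : a < 2 ^ j) (hb : b < 2 ^ (m + 1 - j)) :
    ∃ q ∈ glue m Q E, q.1 / 2 ^ (m + 1 - j) = a ∧ q.2 / 2 ^ j = b := by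
  rcases j with _ | j
  · obtain rfl : a = 0 := by simpa using ha
    rw [Nat.sub_zero, pow_succ] at hb
    let i : Fin 2 := ⟨(b + if b / 2 ∈ E then 1 else 0) % 2, Nat.mod_lt _ two_pos⟩
    obtain ⟨p, hp, hp₂⟩ := (hQ i).exists_mem_snd_eq (b := b / 2) (by omega)
    have hq : lift m E i p ∈ glue m Q E := mem_glue.2 ⟨i, p, hp, rfl⟩
    refine ⟨_, hq, Nat.div_eq_of_lt (mem_range.1 (mem_product.1 (glue_subset hQ E hq)).1), ?_⟩
    simp only [lift, i, hp₂, pow_zero, Nat.div_one]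
    split_ifs <;> omega
  · let i : Fin 2 := ⟨a / 2 ^ j, Nat.div_lt_of_lt_mul (by rwa [← pow_succ])⟩
    obtain ⟨p, hp, hp₁, hp₂⟩ := (hQ i).exists_mem (j := j) (by omega)
      (Nat.mod_lt a (by positivity)) (by simpa using hb)
    refine ⟨lift m E i p, mem_glue.2 ⟨i, p, hp, rfl⟩, ?_, ?_⟩
    · rw [Nat.add_sub_add_right, lift_fst_div_two_pow_sub (by omega) ((hQ i).lt hp).1, hp₁]
      exact Nat.div_add_mod a (2 ^ j)
    · rw [← div_two_div_two_pow, lift_snd_div_two, hp₂]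

lemma eq_of_mem_glue (hQ : ∀ i, IsBinaryNet m (Q i)) (E : Finset ℕ) {j : ℕ} (hj : j ≤ m + 1)
    {q q' : ℕ × ℕ} (hq : q ∈ glue m Q E) (hq' : q' ∈ glue m Q E)
    (h₁ : q.1 / 2 ^ (m + 1 - j) = q'.1 / 2 ^ (m + 1 - j)) (h₂ : q.2 / 2 ^ j = q'.2 / 2 ^ j) :
    q = q' := by
  obtain ⟨i, p, hp, rfl⟩ := mem_glue.1 hq
  obtain ⟨i', p', hp', rfl⟩ := mem_glue.1 hq'
  have hp₁ := ((hQ i).lt hp).1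
  have hp'₁ := ((hQ i').lt hp').1
  rcases j with _ | j
  · rw [pow_zero, Nat.div_one, Nat.div_one] at h₂
    have hrow : p.2 = p'.2 := by
      rw [← lift_snd_div_two (m := m) (E := E) (i := i), h₂, lift_snd_div_two]
    obtain rfl : i = i' := by
      simp only [lift, hrow] at h₂
      have := i.isLt
      have := i'.isLt
      exact Fin.ext (by split_ifs at h₂ <;> omega)
    rw [(hQ i).eq_of_snd_eq hp hp' hrow]
  · rw [Nat.add_sub_add_right, div_two_pow_sub_eq_div_iff (by omega), lift_fst_div hp₁,
      lift_fst_div hp'₁, lift_fst_mod hp₁, lift_fst_mod hp'₁] at h₁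
    rw [← div_two_div_two_pow, ← div_two_div_two_pow, lift_snd_div_two, lift_snd_div_two] at h₂
    obtain rfl := Fin.ext h₁.1
    rw [(hQ i).eq_of_div_eq (by omega) hp hp' h₁.2 h₂]

lemma IsBinaryNet.glue (hQ : ∀ i, IsBinaryNet m (Q i)) (E : Finset ℕ) :
    IsBinaryNet (m + 1) (glue m Q E) :=
  .of_exists_of_eq (glue_subset hQ E) (fun _ hj _ ha _ hb => exists_mem_glue hQ E hj ha hb)
    (fun _ hj _ hq _ hq' => eq_of_mem_glue hQ E hj hq hq')

lemma half_glue (hQ : ∀ i, IsBinaryNet m (Q i)) (E : Finset ℕ) (i : Fin 2) :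
    half m i (glue m Q E) = Q i := by
  ext p
  simp only [mem_half, mem_glue]
  constructor
  · rintro ⟨_, ⟨i', p', hp', rfl⟩, hi, rfl⟩
    have hp'₁ := ((hQ i').lt hp').1
    rw [lift_fst_div hp'₁] at hi
    rwa [squash_lift hp'₁, ← Fin.ext hi]
  · intro hp
    exact ⟨_, ⟨i, p, hp, rfl⟩, lift_fst_div ((hQ i).lt hp).1, squash_lift ((hQ i).lt hp).1⟩

end glue

/-- In a net the two points of a row pair lie in different strips and in different rows, so the
parity of (strip + row) is constant on the pair; `rowPattern` collects the pairs where it is odd,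
i.e. where the left point sits in the odd row. -/
def rowPattern (m : ℕ) (P : Finset (ℕ × ℕ)) : Finset ℕ :=
  (P.filter fun q => (q.1 / 2 ^ m + q.2) % 2 = 1).image fun q => q.2 / 2

lemma rowPattern_glue {m : ℕ} {Q : Fin 2 → Finset (ℕ × ℕ)} (hQ : ∀ i, IsBinaryNet m (Q i))
    {E : Finset ℕ} (hE : E ⊆ range (2 ^ m)) : rowPattern m (glue m Q E) = E := by
  ext v
  simp only [rowPattern, mem_image, mem_filter, mem_glue]
  constructor
  · rintro ⟨_, ⟨⟨i, p, hp, rfl⟩, hodd⟩, rfl⟩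
    rw [lift_parity ((hQ i).lt hp).1] at hodd
    rw [lift_snd_div_two]
    by_contra hv
    simp [hv] at hodd
  · intro hv
    obtain ⟨p, hp, rfl⟩ := (hQ 0).exists_mem_snd_eq (mem_range.1 (hE hv))
    exact ⟨_, ⟨⟨0, p, hp, rfl⟩, by rw [lift_parity ((hQ 0).lt hp).1, if_pos hv]⟩,
      lift_snd_div_two⟩

namespace IsBinaryNet

variable {m : ℕ} {P : Finset (ℕ × ℕ)}

lemma rowPattern_subset (hP : IsBinaryNet (m + 1) P) : rowPattern m P ⊆ range (2 ^ m) := by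
  intro v hv
  obtain ⟨q, hq, rfl⟩ := mem_image.1 hv
  have hy := (hP.lt (mem_filter.1 hq).1).2
  rw [pow_succ] at hy
  exact mem_range.2 (by omega)

lemma parity_eq_of_snd_div_two_eq (hP : IsBinaryNet (m + 1) P) {q q' : ℕ × ℕ} (hq : q ∈ P)
    (hq' : q' ∈ P) (h : q.2 / 2 = q'.2 / 2) : (q.1 / 2 ^ m + q.2) % 2 = (q'.1 / 2 ^ m + q'.2) % 2 := by
  by_cases hqq : q = q'
  · rw [hqq]
  have hhalf : q.1 / 2 ^ m ≠ q'.1 / 2 ^ m := fun h' =>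
    hqq (hP.eq_of_div_eq (j := 1) (by omega) hq hq' (by simpa using h') (by simpa using h))
  have hrow : q.2 ≠ q'.2 := fun h' => hqq (hP.eq_of_snd_eq hq hq' h')
  have := hP.fst_div_lt_two hq
  have := hP.fst_div_lt_two hq'
  generalize q.1 / 2 ^ m = i, q'.1 / 2 ^ m = i' at *
  omega

lemma lift_squash (hP : IsBinaryNet (m + 1) P) {q : ℕ × ℕ} (hq : q ∈ P) :
    lift m (rowPattern m P) ⟨q.1 / 2 ^ m, hP.fst_div_lt_two hq⟩ (squash m q) = q := by
  have hpat : q.2 / 2 ∈ rowPattern m P ↔ (q.1 / 2 ^ m + q.2) % 2 = 1 := by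
    simp only [rowPattern, mem_image, mem_filter]
    constructor
    · rintro ⟨q', ⟨hq', hodd⟩, hv⟩
      rwa [← hP.parity_eq_of_snd_div_two_eq hq' hq hv]
    · exact fun hodd => ⟨q, ⟨hq, hodd⟩, rfl⟩
  have := hP.fst_div_lt_two hq
  ext
  · exact Nat.div_add_mod q.1 (2 ^ m)
  · show 2 * (q.2 / 2) + (q.1 / 2 ^ m + if q.2 / 2 ∈ rowPattern m P then 1 else 0) % 2 = q.2
    generalize q.1 / 2 ^ m = i at *
    by_cases hv : q.2 / 2 ∈ rowPattern m P
    · rw [if_pos hv]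
      have := hpat.1 hv
      omega
    · rw [if_neg hv]
      have := mt hpat.2 hv
      omega

end IsBinaryNet

lemma glue_half_rowPattern {m : ℕ} {P : Finset (ℕ × ℕ)} (hP : IsBinaryNet (m + 1) P) :
    glue m (fun i => half m i P) (rowPattern m P) = P := by
  ext q
  simp only [mem_glue, mem_half]
  constructor
  · rintro ⟨i, _, ⟨q', hq', hi, rfl⟩, rfl⟩
    obtain rfl : i = ⟨q'.1 / 2 ^ m, hP.fst_div_lt_two hq'⟩ := Fin.ext hi.symm
    rwa [hP.lift_squash hq']
  · exact fun hq => ⟨_, _, ⟨q, hq, rfl, rfl⟩, hP.lift_squash hq⟩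

def binaryNetEquiv (m : ℕ) :
    {P // IsBinaryNet (m + 1) P} ≃ (Fin 2 → {P // IsBinaryNet m P}) × (range (2 ^ m)).powerset where
  toFun P := (fun i => ⟨half m i P, P.2.half i⟩,
    ⟨rowPattern m P, mem_powerset.2 P.2.rowPattern_subset⟩)
  invFun Q := ⟨glue m (fun i => Q.1 i) Q.2, .glue (fun i => (Q.1 i).2) Q.2⟩
  left_inv P := Subtype.ext (glue_half_rowPattern P.2)
  right_inv Q := Prod.ext (funext fun i => Subtype.ext (half_glue (fun i => (Q.1 i).2) Q.2 i))
    (Subtype.ext (rowPattern_glue (fun i => (Q.1 i).2) (mem_powerset.1 Q.2.2)))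

lemma card_isBinaryNet_succ (m : ℕ) :
    Nat.card {P // IsBinaryNet (m + 1) P} = Nat.card {P // IsBinaryNet m P} ^ 2 * 2 ^ 2 ^ m := by
  rw [Nat.card_congr (binaryNetEquiv m), Nat.card_prod, Nat.card_pi, Fin.prod_const,
    Nat.card_eq_finsetCard, card_powerset, card_range]

lemma isBinaryNet_zero_iff {P : Finset (ℕ × ℕ)} : IsBinaryNet 0 P ↔ P = {(0, 0)} := by
  refine ⟨fun hP => eq_of_subset_of_card_le (by simpa using hP.1) (by simp [hP.2.1]), ?_⟩
  rintro rfl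
  unfold IsBinaryNet
  decide

lemma card_isBinaryNet (m : ℕ) : Nat.card {P // IsBinaryNet m P} = 2 ^ (m * 2 ^ (m - 1)) := by
  induction m with
  | zero => simp_rw [isBinaryNet_zero_iff]; exact Nat.card_unique
  | succ m ih =>
    rw [card_isBinaryNet_succ, ih, ← pow_mul, ← pow_add]
    rcases m with _ | m
    · rfl
    · congr 1
      simp only [Nat.add_sub_cancel, pow_succ]
      ring

theorem card_binary_nets_general (m : ℕ) :
    {P : Finset (ℕ × ℕ) | IsBinaryNet m P}.ncard = 2 ^ (m * 2 ^ (m - 1)) :=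
  card_isBinaryNet m

/-- The number of binary `(0,m,2)`-nets whose points have coordinates `k·2^{-m}` is
`2^{m·2^{m-1}}`. -/
theorem card_binary_nets (m : ℕ) (hm : 1 ≤ m) :
    {P : Finset (ℕ × ℕ) | IsBinaryNet m P}.ncard = 2 ^ (m * 2 ^ (m - 1)) :=
  card_binary_nets_general m
end

section
/- For every m ≥ 1 and integer base b ≥ 2, the number of standard (0,m,2)-nets in base b (nets whose points have coordinates of the form k·b^{-m}, 0 ≤ k < b^m) is exactly (b!)^{m·b^{m-1}}. -/
/-- `P` is (the integer-grid version of) a standard `(0,m,2)`-net in base `b`, i.e. a net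
whose points have coordinates of the form `k·b^{-m}`: identifying the point
`(k₁ b^{-m}, k₂ b^{-m})` with the pair `(k₁, k₂)`, the set consists of `b^m` grid points and
every `b`-adic rectangle of area `b^{-m}`, i.e. of shape `b^{-j} × b^{-(m-j)}`, contains
exactly one point. -/
def IsBadicNet (b m : ℕ) (P : Finset (ℕ × ℕ)) : Prop :=
  P ⊆ Finset.range (b ^ m) ×ˢ Finset.range (b ^ m) ∧
  P.card = b ^ m ∧
  ∀ j ≤ m, ∀ a < b ^ j, ∀ c < b ^ (m - j),
    (P.filter (fun q => q.1 / b ^ (m - j) = a ∧ q.2 / b ^ j = c)).card = 1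

namespace BadicNetAux

/-- net property for functions -/
def NetFun (b m : ℕ) (f : Fin (b ^ m) → Fin (b ^ m)) : Prop :=
  ∀ j ≤ m, ∀ a < b ^ j, ∀ c < b ^ (m - j),
    (Finset.univ.filter (fun x : Fin (b ^ m) =>
      (x : ℕ) / b ^ (m - j) = a ∧ ((f x : ℕ)) / b ^ j = c)).card = 1

lemma filter_card_one_iff {α : Type*} [Fintype α] {p : α → Prop} [DecidablePred p] :
    (Finset.univ.filter p).card = 1 ↔ ∃! x, p x := by
  rw [Finset.card_eq_one]
  constructor
  · rintro ⟨a, ha⟩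
    have hmem : a ∈ Finset.univ.filter p := ha ▸ Finset.mem_singleton_self a
    refine ⟨a, (Finset.mem_filter.mp hmem).2, fun x hx => ?_⟩
    have : x ∈ Finset.univ.filter p := Finset.mem_filter.mpr ⟨Finset.mem_univ _, hx⟩
    rw [ha, Finset.mem_singleton] at this
    exact this
  · rintro ⟨a, ha, hu⟩
    exact ⟨a, Finset.eq_singleton_iff_unique_mem.mpr
      ⟨Finset.mem_filter.mpr ⟨Finset.mem_univ _, ha⟩,
        fun x hx => hu x (Finset.mem_filter.mp hx).2⟩⟩

lemma netfun_exu {b m : ℕ} {f : Fin (b ^ m) → Fin (b ^ m)} (hf : NetFun b m f)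
    {j a c : ℕ} (hj : j ≤ m) (ha : a < b ^ j) (hc : c < b ^ (m - j)) :
    ∃! x : Fin (b ^ m), (x : ℕ) / b ^ (m - j) = a ∧ ((f x : ℕ)) / b ^ j = c :=
  filter_card_one_iff.mp (hf j hj a ha c hc)

lemma netfun_injective {b m : ℕ} {f : Fin (b ^ m) → Fin (b ^ m)} (hf : NetFun b m f) :
    Function.Injective f := by
  intro x y h
  have hx : (x : ℕ) / b ^ (m - 0) = 0 := Nat.div_eq_of_lt (by simpa using x.isLt)
  have hy : (y : ℕ) / b ^ (m - 0) = 0 := Nat.div_eq_of_lt (by simpa using y.isLt)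
  obtain ⟨z, _, hu⟩ := netfun_exu hf (Nat.zero_le m) (show 0 < b ^ 0 by norm_num)
    (show ((f x : ℕ)) < b ^ (m - 0) by simpa using (f x).isLt)
  have h1 : x = z := hu x ⟨hx, by simp⟩
  have h2 : y = z := hu y ⟨hy, by simp [h]⟩
  rw [h1, h2]

lemma netfun_bijective {b m : ℕ} {f : Fin (b ^ m) → Fin (b ^ m)} (hf : NetFun b m f) :
    Function.Bijective f :=
  Finite.injective_iff_bijective.mp (netfun_injective hf)
variable {b m : ℕ}

lemma pow_split {k m : ℕ} (hk : k ≤ m) : (b : ℕ) ^ m = b ^ (m - k) * b ^ k := by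
  rw [← pow_add, Nat.sub_add_cancel hk]

/-- embed block `A`, offset `x'` into `Fin (b^(m+1))` -/
def embf (A : Fin b) (x' : Fin (b ^ m)) : Fin (b ^ (m + 1)) :=
  ⟨(A : ℕ) * b ^ m + (x' : ℕ), by
    calc (A : ℕ) * b ^ m + (x' : ℕ) < (A : ℕ) * b ^ m + b ^ m := by
          exact Nat.add_lt_add_left x'.isLt _
      _ = ((A : ℕ) + 1) * b ^ m := by ring
      _ ≤ b * b ^ m := Nat.mul_le_mul_right _ A.isLt
      _ = b ^ (m + 1) := by rw [pow_succ]; ring⟩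

lemma embf_val (A : Fin b) (x' : Fin (b ^ m)) :
    ((embf A x' : Fin (b ^ (m+1))) : ℕ) = (A : ℕ) * b ^ m + (x' : ℕ) := rfl

lemma embf_div (A : Fin b) (x' : Fin (b ^ m)) :
    ((embf A x' : Fin (b ^ (m+1))) : ℕ) / b ^ m = A := by
  have hb : 0 < (b : ℕ) ^ m := pos_of_gt x'.isLt
  rw [embf_val, mul_comm, Nat.mul_add_div hb, Nat.div_eq_of_lt x'.isLt, add_zero]

lemma embf_mod (A : Fin b) (x' : Fin (b ^ m)) :
    ((embf A x' : Fin (b ^ (m+1))) : ℕ) % b ^ m = x' := by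
  rw [embf_val, mul_comm, Nat.mul_add_mod, Nat.mod_eq_of_lt x'.isLt]

lemma fin_eq_of_dm {n d : ℕ} {x y : Fin n} (hd : (x : ℕ) / d = (y : ℕ) / d)
    (hm : (x : ℕ) % d = (y : ℕ) % d) : x = y := by
  apply Fin.ext
  rw [← Nat.div_add_mod (x : ℕ) d, ← Nat.div_add_mod (y : ℕ) d, hd, hm]

lemma embf_recon (x : Fin (b ^ (m + 1))) (A : Fin b) (x' : Fin (b ^ m))
    (hA : (x : ℕ) / b ^ m = A) (hx' : (x : ℕ) % b ^ m = x') : embf A x' = x := by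
  apply fin_eq_of_dm (d := b ^ m)
  · rw [embf_div, hA]
  · rw [embf_mod, hx']

/-- splitting the count over `Fin (b^(m+1))` to the block `A`. -/
lemma card_block {k a : ℕ} (hk : k ≤ m) (A : Fin b) (ha : a < b ^ k)
    (p : Fin (b ^ (m + 1)) → Prop) [DecidablePred p] :
    (Finset.univ.filter (fun x : Fin (b ^ (m + 1)) =>
        (x : ℕ) / b ^ (m - k) = (A : ℕ) * b ^ k + a ∧ p x)).card
      = (Finset.univ.filter (fun x' : Fin (b ^ m) =>
        (x' : ℕ) / b ^ (m - k) = a ∧ p (embf A x'))).card := by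
  have hb : 0 < b := A.pos
  have hbm : 0 < (b : ℕ) ^ m := by positivity
  have hps : (b : ℕ) ^ m = b ^ (m - k) * b ^ k := pow_split hk
  have key : ∀ x : Fin (b ^ (m + 1)), (x : ℕ) / b ^ (m - k) = (A : ℕ) * b ^ k + a →
      (x : ℕ) / b ^ m = A ∧ ((x : ℕ) % b ^ m) / b ^ (m - k) = a := by
    intro x hx
    constructor
    · rw [hps, ← Nat.div_div_eq_div_mul, hx, mul_comm (A : ℕ) (b ^ k),
        Nat.mul_add_div (by positivity), Nat.div_eq_of_lt ha, add_zero]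
    · rw [hps, Nat.mod_mul_right_div_self, hx, mul_comm (A : ℕ) (b ^ k),
        Nat.mul_add_mod, Nat.mod_eq_of_lt ha]
  have emb_div : ∀ x' : Fin (b ^ m), ((embf A x' : Fin (b^(m+1))) : ℕ) / b ^ (m - k)
      = (A : ℕ) * b ^ k + (x' : ℕ) / b ^ (m - k) := by
    intro x'
    rw [embf_val]
    have h1 : ∀ n : ℕ, (A : ℕ) * b ^ m + n = n + b ^ (m - k) * ((A : ℕ) * b ^ k) := by
      intro n; rw [hps]; ring
    rw [h1, Nat.add_mul_div_left _ _ (by positivity), add_comm]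
  refine Finset.card_bij' (fun x _ => (⟨(x : ℕ) % b ^ m, Nat.mod_lt _ hbm⟩ : Fin (b ^ m)))
    (fun x' _ => embf A x') ?_ ?_ ?_ ?_
  · intro x hx
    rw [Finset.mem_filter] at hx ⊢
    obtain ⟨hA, hx2⟩ := key x hx.2.1
    have hr : embf A ⟨(x : ℕ) % b ^ m, Nat.mod_lt _ hbm⟩ = x := embf_recon x A _ hA rfl
    exact ⟨Finset.mem_univ _, hx2, by rw [hr]; exact hx.2.2⟩
  · intro x' hx'
    rw [Finset.mem_filter] at hx' ⊢
    refine ⟨Finset.mem_univ _, ?_, hx'.2.2⟩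
    rw [emb_div, hx'.2.1]
  · intro x hx
    rw [Finset.mem_filter] at hx
    exact embf_recon x A _ (key x hx.2.1).1 rfl
  · intro x' _
    apply Fin.ext
    show ((embf A x' : Fin (b^(m+1))) : ℕ) % b ^ m = x'
    rw [embf_mod]

section Glue

/-- high digit block index of `x : Fin (b^(m+1))` -/
def hix (hb : 0 < b) (x : Fin (b ^ (m + 1))) : Fin b :=
  ⟨(x : ℕ) / b ^ m, by
    have h2 : (x : ℕ) < b ^ m * b := by rw [← pow_succ]; exact x.isLt
    exact Nat.div_lt_of_lt_mul h2⟩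

/-- low part of `x : Fin (b^(m+1))` -/
def lox (hb : 0 < b) (x : Fin (b ^ (m + 1))) : Fin (b ^ m) :=
  ⟨(x : ℕ) % b ^ m, Nat.mod_lt _ (by positivity)⟩

/-- glue `b` subnets and a family of permutations of digits into one function. -/
def glue (hb : 0 < b) (F : Fin b → Fin (b ^ m) → Fin (b ^ m))
    (π : Fin (b ^ m) → Equiv.Perm (Fin b)) (x : Fin (b ^ (m + 1))) : Fin (b ^ (m + 1)) :=
  ⟨(F (hix hb x) (lox hb x) : ℕ) * b + (π (F (hix hb x) (lox hb x)) (hix hb x) : ℕ), by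
    calc (F (hix hb x) (lox hb x) : ℕ) * b + (π (F (hix hb x) (lox hb x)) (hix hb x) : ℕ)
        < (F (hix hb x) (lox hb x) : ℕ) * b + b := by
          exact Nat.add_lt_add_left (π (F (hix hb x) (lox hb x)) (hix hb x)).isLt _
      _ = ((F (hix hb x) (lox hb x) : ℕ) + 1) * b := by ring
      _ ≤ b ^ m * b := Nat.mul_le_mul_right _ (F (hix hb x) (lox hb x)).isLt
      _ = b ^ (m + 1) := (pow_succ b m).symm⟩

lemma glue_div (hb : 0 < b) (F : Fin b → Fin (b ^ m) → Fin (b ^ m)) (π : Fin (b ^ m) → Equiv.Perm (Fin b))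
    (x : Fin (b ^ (m + 1))) :
    ((glue hb F π x : Fin (b ^ (m+1))) : ℕ) / b = (F (hix hb x) (lox hb x) : ℕ) := by
  show ((F (hix hb x) (lox hb x) : ℕ) * b + _) / b = _
  rw [mul_comm, Nat.mul_add_div hb, Nat.div_eq_of_lt (Fin.isLt _), add_zero]

lemma glue_mod (hb : 0 < b) (F : Fin b → Fin (b ^ m) → Fin (b ^ m)) (π : Fin (b ^ m) → Equiv.Perm (Fin b))
    (x : Fin (b ^ (m + 1))) :
    ((glue hb F π x : Fin (b ^ (m+1))) : ℕ) % b
      = (π (F (hix hb x) (lox hb x)) (hix hb x) : ℕ) := by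
  show ((F (hix hb x) (lox hb x) : ℕ) * b + _) % b = _
  rw [mul_comm, Nat.mul_add_mod, Nat.mod_eq_of_lt (Fin.isLt _)]

lemma hix_embf (hb : 0 < b) (A : Fin b) (x' : Fin (b ^ m)) : hix hb (embf A x') = A :=
  Fin.ext (embf_div A x')

lemma lox_embf (hb : 0 < b) (A : Fin b) (x' : Fin (b ^ m)) : lox hb (embf A x') = x' :=
  Fin.ext (embf_mod A x')

lemma embf_hix_lox (hb : 0 < b) (x : Fin (b ^ (m + 1))) : embf (hix hb x) (lox hb x) = x :=
  embf_recon x _ _ rfl rfl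

end Glue


lemma netfun_exu0 {b m : ℕ} {f : Fin (b ^ m) → Fin (b ^ m)} (hf : NetFun b m f)
    (v : Fin (b ^ m)) : ∃! x, f x = v := by
  obtain ⟨x, hx, hu⟩ := netfun_exu hf (Nat.zero_le m) (show 0 < b ^ 0 by norm_num)
    (show (v : ℕ) < b ^ (m - 0) by simpa using v.isLt)
  refine ⟨x, Fin.ext (by simpa using hx.2), fun y hy => hu y
    ⟨Nat.div_eq_of_lt (by simpa using y.isLt), by simp [hy]⟩⟩

lemma netfun_glue {b m : ℕ} (hb : 0 < b) {F : Fin b → Fin (b ^ m) → Fin (b ^ m)}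
    (hF : ∀ A, NetFun b m (F A)) (π : Fin (b ^ m) → Equiv.Perm (Fin b)) :
    NetFun b (m + 1) (glue hb F π) := by
  intro j hj a ha c hc
  rcases j with _ | k
  · -- j = 0 : the glued map hits every value exactly once
    have ha0 : a = 0 := by simpa using ha
    subst ha0
    rw [filter_card_one_iff]
    have hc' : c < b ^ (m + 1) := by simpa using hc
    have hvlt : c / b < b ^ m := Nat.div_lt_of_lt_mul (by rw [mul_comm, ← pow_succ]; exact hc')
    set v : Fin (b ^ m) := ⟨c / b, hvlt⟩ with hv
    set d : Fin b := ⟨c % b, Nat.mod_lt _ hb⟩ with hd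
    have hchar : ∀ x : Fin (b ^ (m + 1)),
        (((x : ℕ) / b ^ (m + 1 - 0) = 0) ∧ ((glue hb F π x : ℕ)) / b ^ 0 = c)
          ↔ (F (hix hb x) (lox hb x) = v ∧ π (F (hix hb x) (lox hb x)) (hix hb x) = d) := by
      intro x
      constructor
      · rintro ⟨-, h2⟩
        simp only [pow_zero, Nat.div_one] at h2
        constructor
        · apply Fin.ext; show ((F (hix hb x) (lox hb x) : Fin (b ^ m)) : ℕ) = c / b
          rw [← glue_div hb F π x, h2]
        · apply Fin.ext
          show ((π (F (hix hb x) (lox hb x)) (hix hb x) : Fin b) : ℕ) = c % b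
          rw [← glue_mod hb F π x, h2]
      · rintro ⟨h1, h2⟩
        refine ⟨Nat.div_eq_of_lt (by simpa using x.isLt), ?_⟩
        simp only [pow_zero, Nat.div_one]
        show ((F (hix hb x) (lox hb x) : Fin (b ^ m)) : ℕ) * b
          + ((π (F (hix hb x) (lox hb x)) (hix hb x) : Fin b) : ℕ) = c
        rw [h2, h1]
        show (c / b) * b + c % b = c
        rw [mul_comm]
        exact Nat.div_add_mod c b
    set A₀ : Fin b := (π v).symm d with hA₀
    obtain ⟨x₀', hx₀', hux'⟩ := netfun_exu0 (hF A₀) v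
    refine ⟨embf A₀ x₀', (hchar _).mpr ⟨?_, ?_⟩, ?_⟩
    · rw [hix_embf, lox_embf, hx₀']
    · rw [hix_embf, lox_embf, hx₀']
      exact Equiv.apply_symm_apply _ _
    · intro y hy
      replace hy := (hchar y).mp hy
      obtain ⟨h1, h2⟩ := hy
      have hA : hix hb y = A₀ := by
        rw [hA₀, ← h2, h1, Equiv.symm_apply_apply]
      have hx' : lox hb y = x₀' := hux' _ (by rw [← hA]; exact h1)
      rw [← hA, ← hx']
      exact (embf_hix_lox hb y).symm
  · -- j = k + 1
    have hk : k ≤ m := Nat.succ_le_succ_iff.mp hj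
    have hbk : 0 < (b : ℕ) ^ k := by positivity
    have hsub : m + 1 - (k + 1) = m - k := by omega
    have hAlt : a / b ^ k < b := Nat.div_lt_of_lt_mul (by rw [← pow_succ]; exact ha)
    set A₀ : Fin b := ⟨a / b ^ k, hAlt⟩ with hA₀def
    have ha₁ : a % b ^ k < b ^ k := Nat.mod_lt _ hbk
    have hdecomp : a = (A₀ : ℕ) * b ^ k + a % b ^ k := by
      show a = (a / b ^ k) * b ^ k + a % b ^ k
      rw [mul_comm]; exact (Nat.div_add_mod a (b ^ k)).symm
    have hcb : c < b ^ (m - k) := by rw [← hsub]; exact hc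
    have step1 : (Finset.univ.filter (fun x : Fin (b ^ (m + 1)) =>
        (x : ℕ) / b ^ (m + 1 - (k + 1)) = a ∧ ((glue hb F π x : ℕ)) / b ^ (k + 1) = c)).card
        = (Finset.univ.filter (fun x' : Fin (b ^ m) =>
        (x' : ℕ) / b ^ (m - k) = a % b ^ k ∧
          ((glue hb F π (embf A₀ x') : ℕ)) / b ^ (k + 1) = c)).card := by
      rw [show (Finset.univ.filter (fun x : Fin (b ^ (m + 1)) =>
          (x : ℕ) / b ^ (m + 1 - (k + 1)) = a ∧ ((glue hb F π x : ℕ)) / b ^ (k + 1) = c))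
        = (Finset.univ.filter (fun x : Fin (b ^ (m + 1)) =>
          (x : ℕ) / b ^ (m - k) = (A₀ : ℕ) * b ^ k + a % b ^ k ∧
            ((glue hb F π x : ℕ)) / b ^ (k + 1) = c)) from
        Finset.filter_congr (fun x _ => by rw [hsub, ← hdecomp])]
      exact card_block hk A₀ ha₁ (fun x => ((glue hb F π x : ℕ)) / b ^ (k + 1) = c)
    rw [step1]
    have step2 : ∀ x' : Fin (b ^ m),
        ((glue hb F π (embf A₀ x') : ℕ)) / b ^ (k + 1) = ((F A₀ x' : ℕ)) / b ^ k := by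
      intro x'
      rw [show (b:ℕ) ^ (k+1) = b * b ^ k from pow_succ' b k, ← Nat.div_div_eq_div_mul,
        glue_div, hix_embf, lox_embf]
    rw [Finset.filter_congr (fun x' (_ : x' ∈ Finset.univ) => by rw [step2 x'])]
    exact hF A₀ k hk (a % b ^ k) ha₁ c hcb


lemma glue_injective {b m : ℕ} (hb : 0 < b) (F F' : Fin b → Fin (b ^ m) → Fin (b ^ m))
    (π π' : Fin (b ^ m) → Equiv.Perm (Fin b)) (hF : ∀ A, NetFun b m (F A))
    (h : glue hb F π = glue hb F' π') :
    F = F' ∧ ∀ v A, π v A = π' v A := by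
  have key : ∀ (A : Fin b) (x' : Fin (b ^ m)),
      F A x' = F' A x' ∧ π (F A x') A = π' (F' A x') A := by
    intro A x'
    have h1 := congrFun h (embf A x')
    have hdiv := congrArg (fun z : Fin (b ^ (m+1)) => (z : ℕ) / b) h1
    have hmod := congrArg (fun z : Fin (b ^ (m+1)) => (z : ℕ) % b) h1
    simp only [glue_div hb, glue_mod hb, hix_embf hb, lox_embf hb] at hdiv hmod
    exact ⟨Fin.ext hdiv, Fin.ext hmod⟩
  have hFF : F = F' := funext fun A => funext fun x' => (key A x').1
  subst hFF
  refine ⟨rfl, fun v A => ?_⟩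
  obtain ⟨x', hx'⟩ := (netfun_bijective (hF A)).2 v
  have := (key A x').2
  rw [hx'] at this
  exact this

/-- the block subnet of a net -/
def subF {b m : ℕ} (hb : 0 < b) (f : Fin (b ^ (m + 1)) → Fin (b ^ (m + 1)))
    (A : Fin b) (x' : Fin (b ^ m)) : Fin (b ^ m) :=
  ⟨(f (embf A x') : ℕ) / b, by
    apply Nat.div_lt_of_lt_mul
    rw [mul_comm, ← pow_succ]
    exact (f (embf A x')).isLt⟩

lemma subF_netfun {b m : ℕ} (hb : 0 < b) {f : Fin (b ^ (m + 1)) → Fin (b ^ (m + 1))}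
    (hf : NetFun b (m + 1) f) (A : Fin b) : NetFun b m (subF hb f A) := by
  intro k hk a ha c hc
  have hbig := hf (k + 1) (by omega) ((A : ℕ) * b ^ k + a)
    (by
      calc (A : ℕ) * b ^ k + a < (A : ℕ) * b ^ k + b ^ k := Nat.add_lt_add_left ha _
        _ = ((A : ℕ) + 1) * b ^ k := by ring
        _ ≤ b * b ^ k := Nat.mul_le_mul_right _ A.isLt
        _ = b ^ (k + 1) := (pow_succ' b k).symm)
    c (by rw [Nat.succ_sub_succ]; exact hc)
  simp only [Nat.succ_sub_succ] at hbig
  rw [card_block hk A ha (fun x => ((f x : ℕ)) / b ^ (k + 1) = c)] at hbig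
  have hiff : ∀ x' : Fin (b ^ m),
      ((x' : ℕ) / b ^ (m - k) = a ∧ ((subF hb f A x' : ℕ)) / b ^ k = c) ↔
        ((x' : ℕ) / b ^ (m - k) = a ∧ ((f (embf A x') : ℕ)) / b ^ (k + 1) = c) := by
    intro x'
    have : ((subF hb f A x' : ℕ)) / b ^ k = ((f (embf A x') : ℕ)) / b ^ (k + 1) := by
      show ((f (embf A x') : ℕ) / b) / b ^ k = _
      rw [Nat.div_div_eq_div_mul, ← (show (b:ℕ) ^ (k+1) = b * b ^ k from pow_succ' b k)]
    rw [this]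
  rw [Finset.filter_congr (fun x' (_ : x' ∈ Finset.univ) => hiff x')]
  exact hbig

lemma glue_surjective {b m : ℕ} (hb : 0 < b) {f : Fin (b ^ (m + 1)) → Fin (b ^ (m + 1))}
    (hf : NetFun b (m + 1) f) :
    ∃ (F : Fin b → Fin (b ^ m) → Fin (b ^ m)) (π : Fin (b ^ m) → Equiv.Perm (Fin b)),
      (∀ A, NetFun b m (F A)) ∧ glue hb F π = f := by
  set F := subF hb f with hFdef
  have hFA : ∀ A, NetFun b m (F A) := subF_netfun hb hf
  have eA : ∀ A : Fin b, Function.Bijective (F A) := fun A => netfun_bijective (hFA A)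
  set e : Fin b → (Fin (b ^ m) ≃ Fin (b ^ m)) := fun A => Equiv.ofBijective (F A) (eA A)
    with hedef
  have hva : ∀ (A : Fin b) (v : Fin (b ^ m)), ((f (embf A ((e A).symm v)) : ℕ)) / b = v := by
    intro A v
    show ((F A ((e A).symm v) : Fin (b ^ m)) : ℕ) = (v : ℕ)
    exact congrArg Fin.val ((e A).apply_symm_apply v)
  set q : Fin (b ^ m) → Fin b → Fin b :=
    fun v A => ⟨(f (embf A ((e A).symm v)) : ℕ) % b, Nat.mod_lt _ hb⟩ with hqdef
  have qinj : ∀ v, Function.Injective (q v) := by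
    intro v A₁ A₂ hq
    have hmod : ((f (embf A₁ ((e A₁).symm v)) : ℕ)) % b
        = ((f (embf A₂ ((e A₂).symm v)) : ℕ)) % b := congrArg Fin.val hq
    have hfeq : f (embf A₁ ((e A₁).symm v)) = f (embf A₂ ((e A₂).symm v)) := by
      apply Fin.ext
      rw [← Nat.div_add_mod ((f (embf A₁ ((e A₁).symm v)) : ℕ)) b,
        ← Nat.div_add_mod ((f (embf A₂ ((e A₂).symm v)) : ℕ)) b, hva, hva, hmod]
    have hxeq := netfun_injective hf hfeq
    have := congrArg (hix hb) hxeq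
    rwa [hix_embf hb, hix_embf hb] at this
  refine ⟨F, fun v => Equiv.ofBijective (q v) (Finite.injective_iff_bijective.mp (qinj v)),
    hFA, ?_⟩
  funext x
  set A := hix hb x
  set x' := lox hb x
  have hsymm : (e A).symm (F A x') = x' := (e A).injective (by rw [Equiv.apply_symm_apply]; rfl)
  apply Fin.ext
  show ((F A x' : Fin (b ^ m)) : ℕ) * b + ((q (F A x') A : Fin b) : ℕ) = ((f x : Fin (b ^ (m+1))) : ℕ)
  have h1 : ((q (F A x') A : Fin b) : ℕ) = (f x : ℕ) % b := by
    show ((f (embf A ((e A).symm (F A x'))) : ℕ)) % b = _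
    rw [hsymm, embf_hix_lox hb]
  have h2 : ((F A x' : Fin (b ^ m)) : ℕ) = (f x : ℕ) / b := by
    show ((f (embf A x') : ℕ)) / b = _
    rw [embf_hix_lox hb]
  rw [h1, h2, mul_comm]
  exact Nat.div_add_mod _ b


lemma card_step {b : ℕ} (hb : 0 < b) (m : ℕ) :
    Nat.card {f : Fin (b ^ (m + 1)) → Fin (b ^ (m + 1)) // NetFun b (m + 1) f}
      = Nat.card {f : Fin (b ^ m) → Fin (b ^ m) // NetFun b m f} ^ b
        * (Nat.factorial b) ^ (b ^ m) := by
  have hbij : Function.Bijective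
      (fun p : (Fin b → {f : Fin (b ^ m) → Fin (b ^ m) // NetFun b m f})
          × (Fin (b ^ m) → Equiv.Perm (Fin b)) =>
        (⟨glue hb (fun A => (p.1 A).1) p.2,
          netfun_glue hb (fun A => (p.1 A).2) p.2⟩ :
            {f : Fin (b ^ (m + 1)) → Fin (b ^ (m + 1)) // NetFun b (m + 1) f})) := by
    constructor
    · rintro ⟨F, π⟩ ⟨F', π'⟩ hp
      obtain ⟨hFF, hππ⟩ := glue_injective hb (fun A => (F A).1) (fun A => (F' A).1) π π'
        (fun A => (F A).2) (congrArg Subtype.val hp)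
      have h1 : F = F' := funext fun A => Subtype.ext (congrFun hFF A)
      have h2 : π = π' := funext fun v => Equiv.ext (hππ v)
      rw [h1, h2]
    · rintro ⟨f, hf⟩
      obtain ⟨F, π, hFA, hglue⟩ := glue_surjective hb hf
      exact ⟨(fun A => ⟨F A, hFA A⟩, π), Subtype.ext hglue⟩
  rw [← Nat.card_eq_of_bijective _ hbij, Nat.card_prod, Nat.card_fun, Nat.card_fun]
  simp [Nat.card_eq_fintype_card, Fintype.card_perm]

lemma card_base {b : ℕ} :
    Nat.card {f : Fin (b ^ 0) → Fin (b ^ 0) // NetFun b 0 f} = 1 := by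
  have hx : ∀ x : Fin (b ^ 0), (x : ℕ) = 0 := fun x => Nat.lt_one_iff.mp (by simpa using x.isLt)
  have hall : ∀ f : Fin (b ^ 0) → Fin (b ^ 0), NetFun b 0 f := by
    intro f j hj a ha c hc
    interval_cases j
    simp only [Nat.sub_self, pow_zero, Nat.lt_one_iff] at ha hc
    subst ha; subst hc
    rw [filter_card_one_iff]
    exact ⟨⟨0, by norm_num⟩, ⟨by simp, by simp [hx]⟩, fun y _ => Fin.ext (by simp [hx])⟩
  haveI : Subsingleton (Fin (b ^ 0)) := by rw [pow_zero]; infer_instance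
  haveI : Unique {f : Fin (b ^ 0) → Fin (b ^ 0) // NetFun b 0 f} :=
    { default := ⟨id, hall id⟩
      uniq := fun f => Subtype.ext (funext fun x => Subsingleton.elim _ _) }
  exact Nat.card_unique

lemma card_netfun {b : ℕ} (hb : 0 < b) (m : ℕ) :
    Nat.card {f : Fin (b ^ m) → Fin (b ^ m) // NetFun b m f}
      = (Nat.factorial b) ^ (m * b ^ (m - 1)) := by
  induction m with
  | zero => simpa using card_base
  | succ m ih =>
    rw [card_step hb m, ih, ← pow_mul, ← pow_add]
    congr 1
    rcases Nat.eq_zero_or_pos m with rfl | hm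
    · simp
    · have h1 : m - 1 + 1 = m := Nat.succ_pred_eq_of_pos hm
      have : m * b ^ (m - 1) * b = m * b ^ m := by
        rw [mul_assoc, ← pow_succ, h1]
      rw [this, Nat.succ_sub_one]
      ring


/-- the graph of a net function, as a finset of pairs -/
def toFinset {b m : ℕ} (f : Fin (b ^ m) → Fin (b ^ m)) : Finset (ℕ × ℕ) :=
  Finset.univ.image (fun x : Fin (b ^ m) => ((x : ℕ), ((f x : ℕ))))

lemma graph_inj {b m : ℕ} (f : Fin (b ^ m) → Fin (b ^ m)) :
    Function.Injective (fun x : Fin (b ^ m) => ((x : ℕ), ((f x : ℕ)))) :=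
  fun x y h => Fin.ext (congrArg Prod.fst h)

lemma toFinset_inj {b m : ℕ} {f g : Fin (b ^ m) → Fin (b ^ m)}
    (h : toFinset f = toFinset g) : f = g := by
  funext x
  have hx : ((x : ℕ), ((f x : ℕ))) ∈ toFinset g := by
    rw [← h]; exact Finset.mem_image_of_mem _ (Finset.mem_univ x)
  obtain ⟨y, -, hy⟩ := Finset.mem_image.mp hx
  have h1 : y = x := Fin.ext (congrArg Prod.fst hy)
  subst h1
  exact (Fin.ext (congrArg Prod.snd hy)).symm

lemma toFinset_isNet {b m : ℕ} {f : Fin (b ^ m) → Fin (b ^ m)} (hf : NetFun b m f) :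
    IsBadicNet b m (toFinset f) := by
  refine ⟨?_, ?_, ?_⟩
  · intro q hq
    obtain ⟨x, -, rfl⟩ := Finset.mem_image.mp hq
    exact Finset.mem_product.mpr ⟨Finset.mem_range.mpr x.isLt, Finset.mem_range.mpr (f x).isLt⟩
  · rw [toFinset, Finset.card_image_of_injective _ (graph_inj f), Finset.card_univ,
      Fintype.card_fin]
  · intro j hj a ha c hc
    rw [toFinset, Finset.filter_image, Finset.card_image_of_injective _ (graph_inj f)]
    exact hf j hj a ha c hc

lemma isNet_exists_fun {b m : ℕ} (hb : 0 < b) {P : Finset (ℕ × ℕ)}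
    (hP : IsBadicNet b m P) :
    ∃ f : Fin (b ^ m) → Fin (b ^ m), NetFun b m f ∧ toFinset f = P := by
  obtain ⟨hsub, hcard, hcond⟩ := hP
  have hmemP : ∀ q ∈ P, q.1 < b ^ m ∧ q.2 < b ^ m := by
    intro q hq
    have := Finset.mem_product.mp (hsub hq)
    exact ⟨Finset.mem_range.mp this.1, Finset.mem_range.mp this.2⟩
  have key : ∀ x : Fin (b ^ m), ∃ q : ℕ × ℕ,
      (q ∈ P ∧ q.1 = (x : ℕ)) ∧ ∀ r ∈ P, r.1 = (x : ℕ) → r = q := by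
    intro x
    have h1 := hcond m le_rfl (x : ℕ) x.isLt 0 (by simp [Nat.sub_self])
    have h2 : P.filter (fun q => q.1 / b ^ (m - m) = (x : ℕ) ∧ q.2 / b ^ m = 0)
        = P.filter (fun q => q.1 = (x : ℕ)) := by
      apply Finset.filter_congr
      intro q hq
      have hq2 := (hmemP q hq).2
      simp [Nat.sub_self, Nat.div_eq_of_lt hq2]
    rw [h2, Finset.card_eq_one] at h1
    obtain ⟨q0, hq0⟩ := h1
    have hq0m : q0 ∈ P.filter (fun q => q.1 = (x : ℕ)) := hq0 ▸ Finset.mem_singleton_self q0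
    rw [Finset.mem_filter] at hq0m
    refine ⟨q0, ⟨hq0m.1, hq0m.2⟩, fun r hr hr1 => ?_⟩
    have : r ∈ P.filter (fun q => q.1 = (x : ℕ)) := Finset.mem_filter.mpr ⟨hr, hr1⟩
    rw [hq0, Finset.mem_singleton] at this
    exact this
  choose g hg hu using key
  have hgP : ∀ x, g x ∈ P := fun x => (hg x).1
  have hg1 : ∀ x, (g x).1 = (x : ℕ) := fun x => (hg x).2
  set f : Fin (b ^ m) → Fin (b ^ m) := fun x => ⟨(g x).2, (hmemP _ (hgP x)).2⟩ with hfdef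
  have hgraph : ∀ x : Fin (b ^ m), ((x : ℕ), ((f x : ℕ))) = g x := by
    intro x
    exact Prod.ext (hg1 x).symm rfl
  have hsubP : toFinset f ⊆ P := by
    intro q hq
    obtain ⟨x, -, rfl⟩ := Finset.mem_image.mp hq
    rw [hgraph x]
    exact hgP x
  have hcardf : (toFinset f).card = b ^ m := by
    rw [toFinset, Finset.card_image_of_injective _ (graph_inj f), Finset.card_univ,
      Fintype.card_fin]
  have heq : toFinset f = P := Finset.eq_of_subset_of_card_le hsubP (by rw [hcardf, hcard])
  refine ⟨f, ?_, heq⟩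
  intro j hj a ha c hc
  have h1 := hcond j hj a ha c hc
  rw [← heq, toFinset, Finset.filter_image,
    Finset.card_image_of_injective _ (graph_inj f)] at h1
  exact h1

theorem card_badic_nets' (b m : ℕ) (hb : 2 ≤ b) (hm : 1 ≤ m) :
    {P : Finset (ℕ × ℕ) | IsBadicNet b m P}.ncard
      = (Nat.factorial b) ^ (m * b ^ (m - 1)) := by
  have hb0 : 0 < b := by omega
  have hset : {P : Finset (ℕ × ℕ) | IsBadicNet b m P}
      = (fun f : {f : Fin (b ^ m) → Fin (b ^ m) // NetFun b m f} => toFinset f.1) ''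
        Set.univ := by
    ext P
    simp only [Set.image_univ, Set.mem_setOf_eq, Set.mem_range]
    constructor
    · intro hP
      obtain ⟨f, hf, hfP⟩ := isNet_exists_fun hb0 hP
      exact ⟨⟨f, hf⟩, hfP⟩
    · rintro ⟨f, rfl⟩
      exact toFinset_isNet f.2
  rw [hset, Set.ncard_image_of_injective _ (fun f g h => Subtype.ext (toFinset_inj h)),
    Set.ncard_univ]
  exact card_netfun hb0 m

end BadicNetAux

/-- The number of standard `(0,m,2)`-nets in base `b` is `(b!)^{m·b^{m-1}}`. -/
theorem card_badic_nets (b m : ℕ) (hb : 2 ≤ b) (hm : 1 ≤ m) :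
    {P : Finset (ℕ × ℕ) | IsBadicNet b m P}.ncard
      = (Nat.factorial b) ^ (m * b ^ (m - 1)) :=
  BadicNetAux.card_badic_nets' b m hb hm
end

section
/- In dimension one the following inequality fails: it is NOT true that there exists a constant C > 0 such that for all n and all coefficients α_I ∈ {0,1} indexed by dyadic intervals I ⊆ [0,1) with |I| ≥ 2^{-n}, one has sup_{x∈[0,1)} |Σ_{|I|≥2^{-n}} α_I h_I(x)| ≥ C · Σ_{|I|≥2^{-n}} |α_I|·|I|. Specifically, for each n there is a choice of α_I ∈ {0,1} with sup norm at most n^{2/3} while Σ |α_I||I| ≳ n. -/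
/-!
Read the Haar sum along a dyadic branch as a `±1` walk, and freeze each branch (set all
further coefficients to `0`) as soon as the walk reaches `T = n^{2/3} - 1` in absolute value;
the sup norm is then at most `T + 1 = n^{2/3}`. The mass `∑ |α_I| |I|` of level `k` is
non-increasing in `k`, and by Parseval the total mass of levels `≤ n` is the mean square of the
walk at level `n + 1`. So either at least half of `[0,1)` is still running at level `n + 1`, and
every level has mass `≥ 1/2`, or by Chebyshev the mean square is at least `T²/2 ≥ (n + 1)/2`.
As `n^{2/3} = o(n)`, no estimate `‖∑ α_I h_I‖_∞ ≥ C ∑ |α_I| |I|` can hold.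
-/

open Finset

noncomputable def sum1 (n : ℕ) (α : ℕ → ℕ → ℝ) (x : ℝ) : ℝ :=
  ∑ k ∈ Finset.range (n + 1), ∑ m ∈ Finset.range (2 ^ k), α k m * haar k m x

lemma div_pow_le_and_lt_div_pow_iff {k m : ℕ} {x : ℝ} (hx : 0 ≤ x) :
    ((m : ℝ) / 2 ^ k ≤ x ∧ x < ((m : ℝ) + 1) / 2 ^ k) ↔ ⌊(2 : ℝ) ^ k * x⌋₊ = m := by
  rw [Nat.floor_eq_iff (by positivity), div_le_iff₀ (by positivity),
    lt_div_iff₀ (by positivity), mul_comm x]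

lemma floor_two_pow_succ_mul_div_two (k : ℕ) (x : ℝ) :
    ⌊(2 : ℝ) ^ (k + 1) * x⌋₊ / 2 = ⌊(2 : ℝ) ^ k * x⌋₊ := by
  rw [← Nat.floor_div_ofNat, pow_succ, mul_right_comm, mul_div_cancel_right₀ _ two_ne_zero]

lemma haar_of_floor_ne {k m : ℕ} {x : ℝ} (hx : 0 ≤ x) (hm : ⌊(2 : ℝ) ^ k * x⌋₊ ≠ m) :
    haar k m x = 0 :=
  if_neg ((div_pow_le_and_lt_div_pow_iff hx).not.mpr hm)

lemma haar_floor {k : ℕ} {x : ℝ} (hx : 0 ≤ x) :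
    haar k ⌊(2 : ℝ) ^ k * x⌋₊ x = (-1) ^ (⌊(2 : ℝ) ^ (k + 1) * x⌋₊ + 1) := by
  set M := ⌊(2 : ℝ) ^ k * x⌋₊
  set F := ⌊(2 : ℝ) ^ (k + 1) * x⌋₊
  have hFM : F / 2 = M := floor_two_pow_succ_mul_div_two k x
  have hleft : x < (2 * (M : ℝ) + 1) / 2 ^ (k + 1) ↔ F = 2 * M := by
    have h := div_pow_le_and_lt_div_pow_iff (k := k + 1) (m := 2 * M) hx
    have hM : ((2 * M : ℕ) : ℝ) / 2 ^ (k + 1) ≤ x := by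
      rw [Nat.cast_mul, Nat.cast_ofNat, pow_succ, mul_comm _ (2 : ℝ),
        mul_div_mul_left _ _ two_ne_zero]
      exact ((div_pow_le_and_lt_div_pow_iff hx).mpr rfl).1
    push_cast at h hM
    exact ⟨fun h' => h.mp ⟨hM, h'⟩, fun h' => (h.mpr h').2⟩
  unfold haar
  rw [if_pos ((div_pow_le_and_lt_div_pow_iff hx).mpr rfl)]
  obtain hF | hF : F = 2 * M ∨ F = 2 * M + 1 := by omega
  · rw [if_pos (hleft.mpr hF), hF, pow_succ, pow_mul]; norm_num
  · rw [if_neg (fun h => by have := hleft.mp h; omega), hF, pow_succ, pow_succ, pow_mul]; norm_num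

/-- `haarWalk α k m` is the value of `∑_{|I| > 2^{-k}} α_I h_I` on `[m/2^k, (m+1)/2^k)`, whose
parent interval has index `m / 2`; it lies in the left half of its parent iff `m` is even. -/
noncomputable def haarWalk (α : ℕ → ℕ → ℝ) : ℕ → ℕ → ℝ
  | 0, _ => 0
  | k + 1, m => haarWalk α k (m / 2) + α k (m / 2) * (-1) ^ (m + 1)

lemma haarWalk_two_mul (α : ℕ → ℕ → ℝ) (k m : ℕ) :
    haarWalk α (k + 1) (2 * m) = haarWalk α k m - α k m := by
  simp [haarWalk, pow_succ, pow_mul, sub_eq_add_neg]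

lemma haarWalk_two_mul_add_one (α : ℕ → ℕ → ℝ) (k m : ℕ) :
    haarWalk α (k + 1) (2 * m + 1) = haarWalk α k m + α k m := by
  simp [haarWalk, Nat.add_div_of_dvd_right, pow_succ, pow_mul]

lemma sum_haar_level (α : ℕ → ℕ → ℝ) (k : ℕ) {x : ℝ} (hx : x ∈ Set.Ico (0 : ℝ) 1) :
    ∑ m ∈ range (2 ^ k), α k m * haar k m x
      = α k ⌊(2 : ℝ) ^ k * x⌋₊ * (-1) ^ (⌊(2 : ℝ) ^ (k + 1) * x⌋₊ + 1) := by
  have hmem : ⌊(2 : ℝ) ^ k * x⌋₊ ∈ range (2 ^ k) := by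
    rw [mem_range, Nat.floor_lt (by have := hx.1; positivity)]
    push_cast
    exact mul_lt_of_lt_one_right (by positivity) hx.2
  rw [sum_eq_single_of_mem _ hmem fun m _ hm => by
    rw [haar_of_floor_ne hx.1 (Ne.symm hm), mul_zero], haar_floor hx.1]

lemma sum1_eq_haarWalk (α : ℕ → ℕ → ℝ) (n : ℕ) {x : ℝ} (hx : x ∈ Set.Ico (0 : ℝ) 1) :
    sum1 n α x = haarWalk α (n + 1) ⌊(2 : ℝ) ^ (n + 1) * x⌋₊ := by
  suffices ∀ j, ∑ k ∈ range j, ∑ m ∈ range (2 ^ k), α k m * haar k m x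
      = haarWalk α j ⌊(2 : ℝ) ^ j * x⌋₊ from this (n + 1)
  intro j
  induction j with
  | zero => simp [haarWalk]
  | succ j ih =>
    rw [sum_range_succ, ih, sum_haar_level α j hx, haarWalk, floor_two_pow_succ_mul_div_two]

lemma sum_range_two_mul {M : Type*} [AddCommMonoid M] (N : ℕ) (f : ℕ → M) :
    ∑ m ∈ range (2 * N), f m = ∑ m ∈ range N, (f (2 * m) + f (2 * m + 1)) := by
  induction N with
  | zero => simp
  | succ N ih => rw [Nat.mul_succ, sum_range_succ, sum_range_succ, sum_range_succ, ih, add_assoc]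

noncomputable def levelAvg (k : ℕ) (f : ℕ → ℝ) : ℝ :=
  ∑ m ∈ range (2 ^ k), f m * ((2 : ℝ) ^ k)⁻¹

section levelAvg

variable {k : ℕ} {f g : ℕ → ℝ}

lemma levelAvg_mono (h : ∀ m, f m ≤ g m) : levelAvg k f ≤ levelAvg k g :=
  sum_le_sum fun m _ => mul_le_mul_of_nonneg_right (h m) (by positivity)

lemma levelAvg_const (k : ℕ) (c : ℝ) : levelAvg k (fun _ => c) = c := by
  simp [levelAvg, mul_comm c]

lemma levelAvg_add : levelAvg k (f + g) = levelAvg k f + levelAvg k g := by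
  simp only [levelAvg, Pi.add_apply, add_mul, sum_add_distrib]

lemma levelAvg_mul_const (c : ℝ) : levelAvg k (fun m => f m * c) = levelAvg k f * c := by
  simp only [levelAvg, sum_mul, mul_right_comm]

lemma levelAvg_succ (k : ℕ) (f : ℕ → ℝ) :
    levelAvg (k + 1) f = levelAvg k (fun m => (f (2 * m) + f (2 * m + 1)) / 2) := by
  simp only [levelAvg, pow_succ', sum_range_two_mul, mul_inv]
  exact sum_congr rfl fun m _ => by ring

end levelAvg

lemma levelAvg_haarWalk_sq_succ (α : ℕ → ℕ → ℝ) (k : ℕ) :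
    levelAvg (k + 1) (fun m => haarWalk α (k + 1) m ^ 2)
      = levelAvg k (fun m => haarWalk α k m ^ 2) + levelAvg k (fun m => α k m ^ 2) := by
  rw [levelAvg_succ, ← levelAvg_add]
  congr 1
  ext m
  simp only [haarWalk_two_mul, haarWalk_two_mul_add_one, Pi.add_apply]
  ring

lemma levelAvg_haarWalk_sq (α : ℕ → ℕ → ℝ) (k : ℕ) :
    levelAvg k (fun m => haarWalk α k m ^ 2) = ∑ j ∈ range k, levelAvg j (fun m => α j m ^ 2) := by
  induction k with
  | zero => simp [haarWalk, levelAvg]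
  | succ k ih => rw [levelAvg_haarWalk_sq_succ, ih, sum_range_succ]

-- `haarWalk (stopCoeff T)`, written out directly since `stopCoeff T` is defined in terms of it.
noncomputable def stoppedWalk (T : ℝ) : ℕ → ℕ → ℝ
  | 0, _ => 0
  | k + 1, m => stoppedWalk T k (m / 2) +
      (if |stoppedWalk T k (m / 2)| < T then 1 else 0) * (-1) ^ (m + 1)

noncomputable def stopCoeff (T : ℝ) (k m : ℕ) : ℝ :=
  if |stoppedWalk T k m| < T then 1 else 0

section stopCoeff

variable (T : ℝ)

lemma haarWalk_stopCoeff : haarWalk (stopCoeff T) = stoppedWalk T := by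
  funext k m
  induction k generalizing m with
  | zero => rfl
  | succ k ih => simp only [haarWalk, stoppedWalk, stopCoeff, ih]

lemma stopCoeff_eq (k m : ℕ) :
    stopCoeff T k m = if |haarWalk (stopCoeff T) k m| < T then 1 else 0 := by
  rw [haarWalk_stopCoeff, stopCoeff]

lemma stopCoeff_eq_zero_or_one (k m : ℕ) : stopCoeff T k m = 0 ∨ stopCoeff T k m = 1 := by
  unfold stopCoeff; split_ifs <;> simp

lemma stopCoeff_nonneg (k m : ℕ) : 0 ≤ stopCoeff T k m := by
  rcases stopCoeff_eq_zero_or_one T k m with h | h <;> simp [h]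

lemma stopCoeff_le_one (k m : ℕ) : stopCoeff T k m ≤ 1 := by
  rcases stopCoeff_eq_zero_or_one T k m with h | h <;> simp [h]

lemma stopCoeff_sq (k m : ℕ) : stopCoeff T k m ^ 2 = stopCoeff T k m := by
  rcases stopCoeff_eq_zero_or_one T k m with h | h <;> simp [h]

lemma abs_haarWalk_stopCoeff_le (hT : 0 ≤ T + 1) (k m : ℕ) :
    |haarWalk (stopCoeff T) k m| ≤ T + 1 := by
  induction k generalizing m with
  | zero => simpa [haarWalk] using hT
  | succ k ih =>
    rw [haarWalk, stopCoeff_eq]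
    split_ifs with h
    · calc |haarWalk (stopCoeff T) k (m / 2) + 1 * (-1) ^ (m + 1)|
          ≤ |haarWalk (stopCoeff T) k (m / 2)| + 1 := by
            simpa using abs_add_le _ ((-1 : ℝ) ^ (m + 1))
        _ ≤ T + 1 := by linarith
    · simpa using ih (m / 2)

lemma stopCoeff_succ_le (k m : ℕ) : stopCoeff T (k + 1) m ≤ stopCoeff T k (m / 2) := by
  by_cases h : |haarWalk (stopCoeff T) k (m / 2)| < T
  · rw [stopCoeff_eq T k, if_pos h]
    exact stopCoeff_le_one T _ _
  · have hstop : stopCoeff T k (m / 2) = 0 := by rw [stopCoeff_eq, if_neg h]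
    rw [stopCoeff_eq T (k + 1), haarWalk, hstop]
    simp [h]

lemma levelAvg_stopCoeff_succ_le (k : ℕ) :
    levelAvg (k + 1) (stopCoeff T (k + 1)) ≤ levelAvg k (stopCoeff T k) := by
  rw [levelAvg_succ]
  refine levelAvg_mono fun m => ?_
  have h0 := stopCoeff_succ_le T k (2 * m)
  have h1 := stopCoeff_succ_le T k (2 * m + 1)
  rw [Nat.mul_div_cancel_left m two_pos] at h0
  rw [show (2 * m + 1) / 2 = m by omega] at h1
  linarith

lemma one_sub_levelAvg_stopCoeff_mul_sq_le (hT : 0 ≤ T) (k : ℕ) :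
    (1 - levelAvg k (stopCoeff T k)) * T ^ 2
      ≤ levelAvg k (fun m => haarWalk (stopCoeff T) k m ^ 2) := by
  have hpoint : ∀ m, T ^ 2 ≤ haarWalk (stopCoeff T) k m ^ 2 + stopCoeff T k m * T ^ 2 := by
    intro m
    rw [stopCoeff_eq T k m]
    split_ifs with h
    · nlinarith [sq_nonneg (haarWalk (stopCoeff T) k m)]
    · nlinarith [sq_abs (haarWalk (stopCoeff T) k m), mul_self_le_mul_self hT (not_lt.mp h)]
  have h := levelAvg_mono (k := k) (f := fun _ => T ^ 2)
    (g := (fun m => haarWalk (stopCoeff T) k m ^ 2) + fun m => stopCoeff T k m * T ^ 2) hpoint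
  rw [levelAvg_const, levelAvg_add, levelAvg_mul_const] at h
  linarith

end stopCoeff

noncomputable def haarSupNorm (n : ℕ) (α : ℕ → ℕ → ℝ) : ℝ :=
  sSup ((fun x => |sum1 n α x|) '' Set.Ico (0 : ℝ) 1)

noncomputable def haarMass (n : ℕ) (α : ℕ → ℕ → ℝ) : ℝ :=
  ∑ k ∈ range (n + 1), ∑ m ∈ range (2 ^ k), |α k m| * ((2 : ℝ) ^ k)⁻¹

lemma haarSupNorm_le {n : ℕ} {α : ℕ → ℕ → ℝ} {B : ℝ} (hB : 0 ≤ B)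
    (h : ∀ x ∈ Set.Ico (0 : ℝ) 1, |sum1 n α x| ≤ B) : haarSupNorm n α ≤ B :=
  Real.sSup_le (by rintro _ ⟨x, hx, rfl⟩; exact h x hx) hB

lemma haarSupNorm_stopCoeff_le {T : ℝ} (hT : 0 ≤ T + 1) (n : ℕ) :
    haarSupNorm n (stopCoeff T) ≤ T + 1 :=
  haarSupNorm_le hT fun x hx => by
    rw [sum1_eq_haarWalk _ n hx]
    exact abs_haarWalk_stopCoeff_le T hT _ _

lemma succ_le_two_mul_haarMass_stopCoeff {T : ℝ} {n : ℕ} (hT : 0 ≤ T) (hTn : (n : ℝ) + 1 ≤ T ^ 2) :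
    (n : ℝ) + 1 ≤ 2 * haarMass n (stopCoeff T) := by
  set A := levelAvg (n + 1) (stopCoeff T (n + 1))
  set W := ∑ k ∈ range (n + 1), levelAvg k (stopCoeff T k)
  have hmass : haarMass n (stopCoeff T) = W := by
    simp only [haarMass, W, levelAvg, abs_of_nonneg (stopCoeff_nonneg T _ _)]
  have hA : A ≤ 1 := by
    simpa [levelAvg_const] using levelAvg_mono (k := n + 1) (stopCoeff_le_one T (n + 1))
  have hW_mass : ((n : ℝ) + 1) * A ≤ W := by
    have hanti : Antitone fun k => levelAvg k (stopCoeff T k) :=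
      antitone_nat_of_succ_le (levelAvg_stopCoeff_succ_le T)
    simpa using sum_le_sum fun k (hk : k ∈ range (n + 1)) =>
      hanti (show k ≤ n + 1 by have := mem_range.mp hk; omega)
  have hW_energy : (1 - A) * T ^ 2 ≤ W := by
    have h := one_sub_levelAvg_stopCoeff_mul_sq_le T hT (n + 1)
    simpa only [levelAvg_haarWalk_sq, stopCoeff_sq] using h
  rw [hmass]
  nlinarith [mul_le_mul_of_nonneg_left hTn (sub_nonneg.mpr hA)]

noncomputable def rootCoeff (k _ : ℕ) : ℝ := if k = 0 then 1 else 0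

lemma haarSupNorm_rootCoeff_le_one (n : ℕ) : haarSupNorm n rootCoeff ≤ 1 :=
  haarSupNorm_le zero_le_one fun x _ => by
    rw [sum1, sum_eq_single_of_mem 0 (by simp) fun k _ hk => by simp [rootCoeff, hk]]
    simp only [rootCoeff, if_true, one_mul, pow_zero, range_one, sum_singleton, haar]
    split_ifs <;> simp

lemma haarMass_rootCoeff (n : ℕ) : haarMass n rootCoeff = 1 := by
  rw [haarMass, sum_eq_single_of_mem 0 (by simp) fun k _ hk => by simp [rootCoeff, hk]]
  simp [rootCoeff]

lemma rpow_two_thirds_sub_one_sq_ge {n : ℕ} (hn : 8 ≤ n) :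
    0 ≤ (n : ℝ) ^ ((2 : ℝ) / 3) - 1 ∧ (n : ℝ) + 1 ≤ ((n : ℝ) ^ ((2 : ℝ) / 3) - 1) ^ 2 := by
  set u := (n : ℝ) ^ ((1 : ℝ) / 3)
  have hu3 : u ^ 3 = n := by
    rw [← Real.rpow_natCast, ← Real.rpow_mul n.cast_nonneg]; norm_num
  have hu2 : (n : ℝ) ^ ((2 : ℝ) / 3) = u ^ 2 := by
    rw [← Real.rpow_natCast, ← Real.rpow_mul n.cast_nonneg]; norm_num
  have hu : 2 ≤ u := by
    have : (8 : ℝ) ≤ u ^ 3 := by rw [hu3]; exact_mod_cast hn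
    nlinarith [sq_nonneg (u - 2), sq_nonneg u, Real.rpow_nonneg n.cast_nonneg ((1 : ℝ) / 3)]
  rw [hu2, ← hu3]
  constructor <;> nlinarith

lemma exists_coeff_haarSupNorm_le_and_haarMass_ge (n : ℕ) :
    ∃ α : ℕ → ℕ → ℝ, (∀ k m, α k m = 0 ∨ α k m = 1) ∧
      haarSupNorm n α ≤ (n : ℝ) ^ ((2 : ℝ) / 3) ∧ 8⁻¹ * n ≤ haarMass n α := by
  obtain rfl | hn | hn : n = 0 ∨ (1 ≤ n ∧ n < 8) ∨ 8 ≤ n := by omega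
  · refine ⟨0, fun _ _ => Or.inl rfl, ?_, by simp [haarMass]⟩
    exact haarSupNorm_le (by positivity) fun x _ => by simp [sum1]
  · have hn1 : (1 : ℝ) ≤ n := by exact_mod_cast hn.1
    have hn8 : (n : ℝ) < 8 := by exact_mod_cast hn.2
    refine ⟨rootCoeff, fun k m => by unfold rootCoeff; split_ifs <;> simp, ?_, ?_⟩
    · exact (haarSupNorm_rootCoeff_le_one n).trans (Real.one_le_rpow hn1 (by norm_num))
    · rw [haarMass_rootCoeff]; linarith
  · set T := (n : ℝ) ^ ((2 : ℝ) / 3) - 1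
    obtain ⟨hT, hTn⟩ := rpow_two_thirds_sub_one_sq_ge hn
    refine ⟨stopCoeff T, stopCoeff_eq_zero_or_one T, ?_, ?_⟩
    · simpa [T] using haarSupNorm_stopCoeff_le (by linarith : 0 ≤ T + 1) n
    · linarith [succ_le_two_mul_haarMass_stopCoeff hT hTn]

lemma exists_rpow_two_thirds_lt_mul {ε : ℝ} (hε : 0 < ε) :
    ∃ n : ℕ, (n : ℝ) ^ ((2 : ℝ) / 3) < ε * n := by
  obtain ⟨n, hn⟩ := exists_nat_gt (ε ^ 3)⁻¹
  refine ⟨n, ?_⟩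
  have hn0 : (0 : ℝ) < n := lt_trans (by positivity) hn
  have hcube : ((n : ℝ) ^ ((2 : ℝ) / 3)) ^ 3 = (n : ℝ) ^ 2 := by
    rw [← Real.rpow_natCast, ← Real.rpow_mul hn0.le]; norm_num
  refine lt_of_pow_lt_pow_left₀ 3 (by positivity) ?_
  rw [hcube, mul_pow]
  have : 1 < ε ^ 3 * n := by rw [inv_lt_iff_one_lt_mul₀ (by positivity)] at hn; linarith
  nlinarith [pow_pos hn0 2]

/-- The one-dimensional estimate
`‖∑_{|I| ≥ 2^{-n}} α_I h_I‖_∞ ≥ C ∑_{|I| ≥ 2^{-n}} |α_I|·|I|` fails, even for coefficients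
`α_I ∈ {0,1}`: no constant `C > 0` works for all `n`; specifically, there is `c > 0` such
that for every `n` one can choose `α_I ∈ {0,1}` with sup norm at most `n^{2/3}` while
`∑ |α_I|·|I| ≥ c·n`. -/
theorem one_dim_estimate_fails :
    (¬ ∃ C : ℝ, 0 < C ∧ ∀ n : ℕ, ∀ α : ℕ → ℕ → ℝ,
      (∀ k m, α k m = 0 ∨ α k m = 1) →
      sSup ((fun x => |sum1 n α x|) '' Set.Ico (0 : ℝ) 1)
        ≥ C * ∑ k ∈ Finset.range (n + 1), ∑ m ∈ Finset.range (2 ^ k),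
            |α k m| * ((2 : ℝ) ^ k)⁻¹) ∧
    (∃ c : ℝ, 0 < c ∧ ∀ n : ℕ, ∃ α : ℕ → ℕ → ℝ,
      (∀ k m, α k m = 0 ∨ α k m = 1) ∧
      sSup ((fun x => |sum1 n α x|) '' Set.Ico (0 : ℝ) 1) ≤ (n : ℝ) ^ ((2 : ℝ) / 3) ∧
      (∑ k ∈ Finset.range (n + 1), ∑ m ∈ Finset.range (2 ^ k),
        |α k m| * ((2 : ℝ) ^ k)⁻¹) ≥ c * n) := by
  refine ⟨?_, ⟨8⁻¹, by norm_num, exists_coeff_haarSupNorm_le_and_haarMass_ge⟩⟩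
  rintro ⟨C, hC, hest⟩
  obtain ⟨n, hn⟩ := exists_rpow_two_thirds_lt_mul (show 0 < C * 8⁻¹ by positivity)
  obtain ⟨α, hα, hsup, hmass⟩ := exists_coeff_haarSupNorm_le_and_haarMass_ge n
  have hlower : C * haarMass n α ≤ haarSupNorm n α := hest n α hα
  nlinarith [mul_le_mul_of_nonneg_left hmass hC.le]
end
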